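/- arXiv:2506.07201 — 6 statements merged into one kernel-verified Lean document; each statement's English description precedes it below -/
import Mathlib

section
/- Let k ≥ 2, q ≥ 1, let π ∈ 𝕊_{k−1}, and let 1 ≤ a < b ≤ k. Suppose the set T_{a,b} = {π_a, π_{a+1}, …, π_{b−1}} decomposes into exactly c maximal blocks of consecutive integers. Then the number of edges in E_{a,b}, i.e. the number of x ∈ W^π_{k,q} such that x + e_{π_a} + e_{π_{a+1}} + ⋯ + e_{π_{b−1}} also lies in W^π_{k,q}, equals C(k+q−c−2−|S(π)|, k−1). -/
open Finset

attribute [local instance] Classical.propDecidable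

noncomputable section

/-- `π` is a permutation of `{1,…,k-1}` given in one-line notation
(`π p` is the entry at position `p`), normalized to `0` outside `[1,k-1]`. -/
def OneLine (k : ℕ) (π : ℕ → ℕ) : Prop :=
  Set.BijOn π (Set.Icc 1 (k - 1)) (Set.Icc 1 (k - 1)) ∧
    ∀ p, p ∉ Set.Icc 1 (k - 1) → π p = 0

/-- The set `S(π)` of adjacent inversions of `π`:
those `i ∈ [1,k-2]` such that `i+1` appears before `i` in `π`. -/
def adjInvF (k : ℕ) (π : ℕ → ℕ) : Finset ℕ :=
  (Finset.Icc 1 (k - 2)).filter fun i =>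
    ∃ p ∈ Finset.Icc 1 (k - 1), ∃ r ∈ Finset.Icc 1 (k - 1),
      p < r ∧ π p = i + 1 ∧ π r = i

/-- `W^π_{k,q}`: weakly increasing `(k-1)`-tuples with entries in `[0,q-1]`
that are strictly increasing at every adjacent inversion of `π`
(vectors are functions `ℕ → ℕ` supported on `[1,k-1]`). -/
def W (k q : ℕ) (π : ℕ → ℕ) : Set (ℕ → ℕ) :=
  {v | (∀ i, i ∉ Finset.Icc 1 (k - 1) → v i = 0) ∧
       (∀ i ∈ Finset.Icc 1 (k - 1), v i ≤ q - 1) ∧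
       (∀ i, 1 ≤ i → i + 1 ≤ k - 1 → v i ≤ v (i + 1)) ∧
       (∀ i ∈ adjInvF k π, v i < v (i + 1))}

/-- `x + e_{π_a} + e_{π_{a+1}} + ⋯ + e_{π_{b-1}}`. -/
def shift (π : ℕ → ℕ) (a b : ℕ) (x : ℕ → ℕ) : ℕ → ℕ :=
  fun i => x i + if i ∈ (Finset.Icc a (b - 1)).image π then 1 else 0

/-- Adjacency in the graph `G^π_{k,q}`: one vertex is obtained from the other
by adding `e_{π_a} + ⋯ + e_{π_{b-1}}` for some `1 ≤ a < b ≤ k`. -/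
def AdjRel (k : ℕ) (π : ℕ → ℕ) (x y : ℕ → ℕ) : Prop :=
  ∃ a b, 1 ≤ a ∧ a < b ∧ b ≤ k ∧ (y = shift π a b x ∨ x = shift π a b y)

/-- The number of maximal blocks of consecutive integers of a finite set `T ⊆ ℕ`. -/
def numBlocks (T : Finset ℕ) : ℕ := (T.filter fun t => t + 1 ∉ T).card

/-- `cs_i(π)`: the number of pairs `1 ≤ a < b ≤ k` such that
`T_{a,b} = {π_a,…,π_{b-1}}` decomposes into exactly `i` maximal blocks
of consecutive integers. -/
def cs (k : ℕ) (π : ℕ → ℕ) (i : ℕ) : ℕ :=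
  ((Finset.Icc 1 k ×ˢ Finset.Icc 1 k).filter fun p =>
    p.1 < p.2 ∧ numBlocks ((Finset.Icc p.1 (p.2 - 1)).image π) = i).card

/-- For `i < j`, `{i,j}` is an edge of `G_π` iff `{i,i+1,…,j-1}` occurs as
a set of consecutive entries of `π`. -/
def GpiEdge (k : ℕ) (π : ℕ → ℕ) (i j : ℕ) : Prop :=
  ∃ a, 1 ≤ a ∧ a + (j - i) ≤ k ∧
    (Finset.Icc a (a + (j - i) - 1)).image π = Finset.Icc i (j - 1)

/-- Unordered adjacency in `G_π`. -/
def GpiAdjU (k : ℕ) (π : ℕ → ℕ) (i j : ℕ) : Prop :=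
  (i < j ∧ GpiEdge k π i j) ∨ (j < i ∧ GpiEdge k π j i)

/-- The position of the value `v` in the one-line notation of `π`. -/
def posOf (k : ℕ) (π : ℕ → ℕ) (v : ℕ) : ℕ :=
  if h : ((Finset.Icc 1 (k - 1)).filter fun t => π t = v).Nonempty then
    ((Finset.Icc 1 (k - 1)).filter fun t => π t = v).min' h
  else 0

/-- The rotation `r` on one-line permutations: if `π = π₁…π_{t-1}(k-1)π_{t+1}…π_{k-1}`,
then `r(π) = (π_{t+1}+1)…(π_{k-1}+1) 1 (π₁+1)…(π_{t-1}+1)`. -/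
def rot (k : ℕ) (π : ℕ → ℕ) : ℕ → ℕ := fun p =>
  if p ∉ Finset.Icc 1 (k - 1) then 0
  else if p < k - posOf k π (k - 1) then π (posOf k π (k - 1) + p) + 1
  else if p = k - posOf k π (k - 1) then 1
  else π (p - (k - posOf k π (k - 1))) + 1

/-- The reflection `s` on one-line permutations: if `π = π₁…π_{i-1} 1 π_{i+1}…π_{k-1}`,
then `s(π) = (k+1-π_{i-1})…(k+1-π₁) 1 (k+1-π_{k-1})…(k+1-π_{i+1})`. -/
def srefl (k : ℕ) (π : ℕ → ℕ) : ℕ → ℕ := fun p =>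
  if p ∉ Finset.Icc 1 (k - 1) then 0
  else if p < posOf k π 1 then k + 1 - π (posOf k π 1 - p)
  else if p = posOf k π 1 then 1
  else k + 1 - π (k + posOf k π 1 - p)

/-- The rotation `ρ` of the vertex set `{1,…,k}`. -/
def rotV (k i : ℕ) : ℕ := if i < k then i + 1 else 1

/-- The reflection `σ` of the vertex set `{1,…,k}`. -/
def sreflV (k i : ℕ) : ℕ := if i = 1 then 1 else k + 2 - i

/-- The maximal sorted family `(S₁,…,S_k)` associated with `σ`, `0`-indexed:
`sortedFam k σ (i-1) = S_i`. -/
def sortedFam (k : ℕ) (σ : ℕ → ℕ) : ℕ → Finset ℕ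
  | 0 => insert 1 ((adjInvF k σ).image (· + 1))
  | j + 1 => insert (σ (j + 1) + 1) ((sortedFam k σ j).erase (σ (j + 1)))

/-- `ear(π)`. -/
def ear (k : ℕ) (π : ℕ → ℕ) : ℕ :=
  ((Finset.Icc 1 (k - 2)).filter fun i => π (i + 1) = π i + 1 ∨ π i = π (i + 1) + 1).card
    + (({1, k - 1} : Finset ℕ) ∩ ({π 1, π (k - 1)} : Finset ℕ)).card

/-- `ε_i(π) = 1` if `i-1 ∈ S(π)` and `0` otherwise. -/
def eps (k : ℕ) (π : ℕ → ℕ) (i : ℕ) : ℕ := if i - 1 ∈ adjInvF k π then 1 else 0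

/-- Extension of a vector with the conventions `x_k = q-1` (`x₀ = 0` holds by
the normalization of vectors in `W^π_{k,q}`). -/
def xext (k q : ℕ) (x : ℕ → ℕ) (i : ℕ) : ℕ := if i = k then q - 1 else x i

/-- The label list `L^π(x) = {i ∈ [1,k] : x_{i-1} < x_i - ε_i(π)}`. -/
def labels (k q : ℕ) (π : ℕ → ℕ) (x : ℕ → ℕ) : Finset ℕ :=
  (Finset.Icc 1 k).filter fun i => xext k q x (i - 1) + eps k π i < xext k q x i

/-- A Sperner labeling of `G^π_{k,q}`. -/
def IsSperner (k q : ℕ) (π : ℕ → ℕ) (f : (ℕ → ℕ) → ℕ) : Prop :=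
  (∀ x ∈ W k q π, f x = 0 ∨ f x ∈ labels k q π x) ∧
  (∀ x ∈ W k q π, ∀ y ∈ W k q π, AdjRel k π x y → f x = f y ∨ f x = 0 ∨ f y = 0)

/-- The entry `w` appears between the entries `u` and `v` in `π`. -/
def Between (k : ℕ) (π : ℕ → ℕ) (u v w : ℕ) : Prop :=
  (posOf k π u < posOf k π w ∧ posOf k π w < posOf k π v) ∨
  (posOf k π v < posOf k π w ∧ posOf k π w < posOf k π u)

/-- A good set of colors for `π`. -/
def GoodSet (k : ℕ) (π : ℕ → ℕ) (C : Finset ℕ) : Prop :=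
  C ⊆ Finset.Icc 1 k ∧
  (∀ i ∈ C, ∀ j ∈ C, i ≠ j → ¬ GpiAdjU k π i j) ∧
  (∀ a ∈ C, ∀ b ∈ C, 1 < a → a < b → b < k →
      ((Between k π (a - 1) b a ∨ Between k π (a - 1) b (b - 1)) ∧
       (Between k π (b - 1) a (a - 1) ∨ Between k π (b - 1) a b))) ∧
  (1 ∈ C → ∀ b ∈ C, b ≠ 1 → Between k π 1 (b - 1) b) ∧
  (k ∈ C → ∀ b ∈ C, b ≠ k → Between k π b (k - 1) (b - 1))

/-- `x_a - x_{a-1} - ε_a(π)`, the `a`-th coordinate of the distance map `D`. -/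
def dval (k q : ℕ) (π : ℕ → ℕ) (x : ℕ → ℕ) (a : ℕ) : ℕ :=
  xext k q x a - xext k q x (a - 1) - eps k π a

/-- The distance coloring determined by a set of colors `C`:
`x` gets color `a ∈ C` if `dval x a` is the unique maximum of `dval x` on `C`,
and `0` otherwise. -/
def dcol (k q : ℕ) (π : ℕ → ℕ) (C : Finset ℕ) (x : ℕ → ℕ) : ℕ :=
  if h : ∃ a ∈ C, ∀ b ∈ C, b ≠ a → dval k q π x b < dval k q π x a then h.choose else 0

/-!
Put `x₀ = 0` and `x_k = q - 1`. A vector `x` lies in `W^π_{k,q}` iff every step `x_{j+1} - x_j`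
(`0 ≤ j < k`) is at least `[j ∈ S(π)]`. For `x + 1_T` to lie in `W^π_{k,q}` as well, the step must
be one larger exactly where a block of `T` ends (`j ∈ T`, `j + 1 ∉ T`). The required minimal steps
add up to `|S(π)| + c`, so edges correspond to compositions of `q - 1 - |S(π)| - c` into `k`
nonnegative parts, which stars and bars counts.
-/

theorem Finset.card_piAntidiag_nat {ι : Type*} [DecidableEq ι] (s : Finset ι) (n : ℕ) :
    #(piAntidiag s n) = (#s + n - 1).choose n := by
  rw [← card_finsuppAntidiag_nat_eq_choose, finsuppAntidiag, card_map, card_attach]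

def StepsAtLeast (k q : ℕ) (g x : ℕ → ℕ) : Prop :=
  (∀ i ∉ Icc 1 (k - 1), x i = 0) ∧ ∀ j < k, xext k q x j + g j ≤ xext k q x (j + 1)

def slack (k q : ℕ) (g x : ℕ → ℕ) (j : ℕ) : ℕ :=
  if j < k then xext k q x (j + 1) - xext k q x j - g j else 0

section Steps

variable {k q : ℕ} {g x : ℕ → ℕ}

lemma xext_of_ne {i : ℕ} (hi : i ≠ k) : xext k q x i = x i := if_neg hi

lemma xext_self : xext k q x k = q - 1 := if_pos rfl

lemma StepsAtLeast.xext_eq_sum (hk : k ≠ 0) (hx : StepsAtLeast k q g x) {i : ℕ} (hi : i ≤ k) :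
    xext k q x i = ∑ j ∈ range i, (g j + slack k q g x j) := by
  induction i with
  | zero => rw [xext_of_ne (Ne.symm hk)]; exact hx.1 0 (by simp)
  | succ i ih =>
    have hstep := hx.2 i hi
    rw [sum_range_succ, ← ih (by omega), slack, if_pos (by omega)]
    omega

lemma StepsAtLeast.sum_add_sum_slack (hk : k ≠ 0) (hx : StepsAtLeast k q g x) :
    ∑ j ∈ range k, g j + ∑ j ∈ range k, slack k q g x j = q - 1 := by
  rw [← sum_add_distrib, ← hx.xext_eq_sum hk le_rfl, xext_self]

lemma StepsAtLeast.xext_mono (hk : k ≠ 0) (hx : StepsAtLeast k q g x) {i j : ℕ} (hij : i ≤ j)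
    (hj : j ≤ k) : xext k q x i ≤ xext k q x j := by
  rw [hx.xext_eq_sum hk (hij.trans hj), hx.xext_eq_sum hk hj]
  exact sum_le_sum_of_subset (range_subset_range.2 hij)

lemma injOn_slack (hk : k ≠ 0) : Set.InjOn (slack k q g) {x | StepsAtLeast k q g x} := by
  intro x hx y hy hxy
  ext i
  by_cases hi : i ∈ Icc 1 (k - 1)
  · have hik : i < k := by rw [mem_Icc] at hi; omega
    have := hx.xext_eq_sum hk hik.le
    rwa [hxy, ← hy.xext_eq_sum hk hik.le, xext_of_ne hik.ne, xext_of_ne hik.ne] at this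
  · rw [hx.1 i hi, hy.1 i hi]

lemma slack_mem_piAntidiag (hk : k ≠ 0) (hx : StepsAtLeast k q g x) :
    slack k q g x ∈ piAntidiag (range k) (q - 1 - ∑ j ∈ range k, g j) := by
  refine mem_piAntidiag.2 ⟨Nat.eq_sub_of_add_eq' (hx.sum_add_sum_slack hk), fun j hj => ?_⟩
  by_contra hjk
  exact hj (if_neg (by simpa using hjk))

lemma exists_stepsAtLeast_slack_eq (hk : k ≠ 0) (hG : ∑ j ∈ range k, g j ≤ q - 1) {d : ℕ → ℕ}
    (hd : d ∈ piAntidiag (range k) (q - 1 - ∑ j ∈ range k, g j)) :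
    ∃ x, StepsAtLeast k q g x ∧ slack k q g x = d := by
  obtain ⟨hsum, hsupp⟩ := mem_piAntidiag.1 hd
  set P : ℕ → ℕ := fun i => ∑ j ∈ range i, (g j + d j)
  have hP : ∀ i, P (i + 1) = P i + (g i + d i) := fun i => sum_range_succ _ i
  have hPk : P k = q - 1 := by simp only [P, sum_add_distrib, hsum]; omega
  set x : ℕ → ℕ := fun i => if i ∈ Icc 1 (k - 1) then P i else 0
  have hxP : ∀ i ≤ k, xext k q x i = P i := by
    intro i hi
    rcases hi.eq_or_lt with rfl | hik
    · rw [xext_self, hPk]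
    · rw [xext_of_ne hik.ne]
      by_cases hi0 : i = 0
      · simp [x, P, hi0]
      · exact if_pos (mem_Icc.2 ⟨by omega, by omega⟩)
  have hx : StepsAtLeast k q g x :=
    ⟨fun i hi => if_neg hi, fun j hj => by rw [hxP j hj.le, hxP (j + 1) hj, hP]; omega⟩
  refine ⟨x, hx, funext fun j => ?_⟩
  by_cases hj : j < k
  · rw [slack, if_pos hj, hxP j hj.le, hxP (j + 1) hj, hP]
    omega
  · rw [slack, if_neg hj]
    by_contra h
    exact hj (by simpa using hsupp j (Ne.symm h))

lemma ncard_stepsAtLeast (hk : k ≠ 0) (hG : ∑ j ∈ range k, g j ≤ q - 1) :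
    {x | StepsAtLeast k q g x}.ncard = (q - 1 - ∑ j ∈ range k, g j + (k - 1)).choose (k - 1) := by
  have himage : slack k q g '' {x | StepsAtLeast k q g x}
      = piAntidiag (range k) (q - 1 - ∑ j ∈ range k, g j) := by
    ext d
    constructor
    · rintro ⟨x, hx, rfl⟩
      exact slack_mem_piAntidiag hk hx
    · intro hd
      obtain ⟨x, hx, rfl⟩ := exists_stepsAtLeast_slack_eq hk hG hd
      exact ⟨x, hx, rfl⟩
  rw [← (injOn_slack hk).ncard_image, himage, Set.ncard_coe_finset, card_piAntidiag_nat,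
    card_range, show k + (q - 1 - ∑ j ∈ range k, g j) - 1 = q - 1 - ∑ j ∈ range k, g j + (k - 1)
      by omega]
  exact Nat.choose_symm_add

lemma stepsAtLeast_eq_empty (hk : k ≠ 0) (hG : q - 1 < ∑ j ∈ range k, g j) :
    {x | StepsAtLeast k q g x} = ∅ :=
  Set.eq_empty_of_forall_notMem fun x hx => by have := hx.sum_add_sum_slack hk; omega

end Steps

lemma le_and_add_ite_le_iff (u v s : ℕ) (t t' : Prop) {_ : Decidable t} {_ : Decidable t'} :
    u + s ≤ v ∧ (u + if t then 1 else 0) + s ≤ v + (if t' then 1 else 0) ↔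
      u + (s + if t ∧ ¬t' then 1 else 0) ≤ v := by
  by_cases t <;> by_cases t' <;> simp [*] <;> omega

def edgeMinStep (k : ℕ) (π : ℕ → ℕ) (T : Finset ℕ) (j : ℕ) : ℕ :=
  (if j ∈ adjInvF k π then 1 else 0) + if j ∈ T ∧ j + 1 ∉ T then 1 else 0

section Edges

variable {k q : ℕ} {π x : ℕ → ℕ} {T : Finset ℕ}

lemma adjInvF_subset : adjInvF k π ⊆ Icc 1 (k - 2) := by
  intro i hi
  simp only [adjInvF, mem_filter] at hi
  exact hi.1

lemma mem_W_iff_stepsAtLeast (hk : k ≠ 0) :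
    x ∈ W k q π ↔ StepsAtLeast k q (fun j => if j ∈ adjInvF k π then 1 else 0) x := by
  have hS : ∀ i ∈ adjInvF k π, 1 ≤ i ∧ i ≤ k - 2 := fun i hi => mem_Icc.1 (adjInvF_subset hi)
  constructor
  · rintro ⟨hx0, hxq, hmono, hinv⟩
    refine ⟨hx0, fun j hj => ?_⟩
    rw [xext_of_ne hj.ne]
    rcases Nat.eq_zero_or_pos j with rfl | hj0
    · have h0S : 0 ∉ adjInvF k π := fun h => by have := hS 0 h; omega
      simp [hx0 0 (by simp), h0S]
    by_cases hjk : j + 1 = k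
    · have hjS : j ∉ adjInvF k π := fun h => by have := hS j h; omega
      simpa [hjk, xext_self, hjS] using hxq j (mem_Icc.2 ⟨hj0, by omega⟩)
    · rw [xext_of_ne hjk]
      dsimp only
      split_ifs with hjS
      · exact hinv j hjS
      · simpa using hmono j hj0 (by omega)
  · intro hx
    refine ⟨hx.1, fun i hi => ?_, fun i hi1 hik => ?_, fun i hiS => ?_⟩
    · have hik := (mem_Icc.1 hi).2
      simpa [xext_of_ne (show i ≠ k by omega), xext_self] using
        hx.xext_mono hk (show i ≤ k by omega) le_rfl
    · have hstep := hx.2 i (by omega)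
      rw [xext_of_ne (i := i) (by omega), xext_of_ne (i := i + 1) (by omega)] at hstep
      omega
    · obtain ⟨hi1, hik⟩ := hS i hiS
      have hstep := hx.2 i (by omega)
      dsimp only at hstep
      rw [xext_of_ne (i := i) (by omega), xext_of_ne (i := i + 1) (by omega), if_pos hiS] at hstep
      omega

lemma xext_add_indicator (hkT : k ∉ T) (i : ℕ) :
    xext k q (fun i => x i + if i ∈ T then 1 else 0) i = xext k q x i + if i ∈ T then 1 else 0 := by
  by_cases hi : i = k
  · simp [xext, hi, hkT]
  · simp [xext, hi]

lemma mem_W_and_add_indicator_mem_W_iff (hk : k ≠ 0) (hT : T ⊆ Icc 1 (k - 1)) :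
    x ∈ W k q π ∧ (fun i => x i + if i ∈ T then 1 else 0) ∈ W k q π ↔
      StepsAtLeast k q (edgeMinStep k π T) x := by
  have hkT : k ∉ T := fun h => by have := mem_Icc.1 (hT h); omega
  simp only [mem_W_iff_stepsAtLeast hk, StepsAtLeast, xext_add_indicator hkT, edgeMinStep]
  constructor
  · rintro ⟨⟨hx0, hx⟩, -, hy⟩
    exact ⟨hx0, fun j hj => (le_and_add_ite_le_iff ..).1 ⟨hx j hj, hy j hj⟩⟩
  · rintro ⟨hx0, hx⟩
    refine ⟨⟨hx0, fun j hj => ((le_and_add_ite_le_iff ..).2 (hx j hj)).1⟩,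
      fun i hi => ?_, fun j hj => ((le_and_add_ite_le_iff ..).2 (hx j hj)).2⟩
    rw [hx0 i hi, if_neg fun h => hi (hT h)]

lemma sum_edgeMinStep (hT : T ⊆ Icc 1 (k - 1)) :
    ∑ j ∈ range k, edgeMinStep k π T j = #(adjInvF k π) + numBlocks T := by
  have hS : adjInvF k π ⊆ range k := fun j hj =>
    mem_range.2 (by have := mem_Icc.1 (adjInvF_subset hj); omega)
  have hTk : T ⊆ range k := fun j hj => mem_range.2 (by have := mem_Icc.1 (hT hj); omega)
  simp only [edgeMinStep, sum_add_distrib, sum_boole, Nat.cast_id, ← filter_filter,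
    filter_mem_eq_inter, inter_eq_right.2 hS, inter_eq_right.2 hTk, numBlocks]

end Edges

lemma OneLine.image_Icc_subset {k : ℕ} {π : ℕ → ℕ} (hπ : OneLine k π) {a b : ℕ} (ha : 1 ≤ a)
    (hbk : b ≤ k) : (Icc a (b - 1)).image π ⊆ Icc 1 (k - 1) := by
  intro t ht
  obtain ⟨p, hp, rfl⟩ := mem_image.1 ht
  rw [mem_Icc] at hp
  simpa using hπ.1.mapsTo (show p ∈ Set.Icc 1 (k - 1) from ⟨by omega, by omega⟩)

theorem stmt2_general (k q : ℕ) (hk : 2 ≤ k) (hq : 1 ≤ q) (π : ℕ → ℕ) (hπ : OneLine k π)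
    (a b c : ℕ) (ha : 1 ≤ a) (hbk : b ≤ k)
    (hc : numBlocks ((Finset.Icc a (b - 1)).image π) = c) :
    {x | x ∈ W k q π ∧ shift π a b x ∈ W k q π}.ncard
      = Nat.choose (k + q - c - 2 - (adjInvF k π).card) (k - 1) := by
  set T := (Icc a (b - 1)).image π
  have hT : T ⊆ Icc 1 (k - 1) := hπ.image_Icc_subset ha hbk
  have hedges : {x | x ∈ W k q π ∧ shift π a b x ∈ W k q π}
      = {x | StepsAtLeast k q (edgeMinStep k π T) x} :=
    Set.ext fun x => mem_W_and_add_indicator_mem_W_iff (by omega) hT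
  have hsum := sum_edgeMinStep (π := π) hT
  rw [hedges]
  rcases le_or_gt (∑ j ∈ range k, edgeMinStep k π T j) (q - 1) with hG | hG
  · rw [ncard_stepsAtLeast (by omega) hG]
    congr 1
    omega
  · rw [stepsAtLeast_eq_empty (by omega) hG, Set.ncard_empty, Nat.choose_eq_zero_of_lt]
    omega

theorem stmt2 (k q : ℕ) (hk : 2 ≤ k) (hq : 1 ≤ q) (π : ℕ → ℕ) (hπ : OneLine k π)
    (a b c : ℕ) (ha : 1 ≤ a) (hab : a < b) (hbk : b ≤ k)
    (hc : numBlocks ((Finset.Icc a (b - 1)).image π) = c) :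
    {x | x ∈ W k q π ∧ shift π a b x ∈ W k q π}.ncard
      = Nat.choose (k + q - c - 2 - (adjInvF k π).card) (k - 1) :=
  stmt2_general k q hk hq π hπ a b c ha hbk hc

end
end

section
/- Let k ≥ 4, π ∈ 𝕊_{k−1}, and let 1 ≤ a < b < c < d ≤ k. If {a,c} and {b,d} are both edges of the graph G_π, then the subgraph of G_π induced on {a,b,c,d} is the complete graph K₄; that is, all six pairs {a,b}, {a,c}, {a,d}, {b,c}, {b,d}, {c,d} are edges of G_π. -/
open Finset

attribute [local instance] Classical.propDecidable

noncomputable section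

private lemma stmt4_mem_of_img {π : ℕ → ℕ} {K : ℕ} (hinj : Set.InjOn π (Set.Icc 1 K))
    {lo hi x : ℕ} (hlo : 1 ≤ lo) (hhi : hi ≤ K) (hx1 : 1 ≤ x) (hx2 : x ≤ K)
    (h : π x ∈ (Finset.Icc lo hi).image π) : x ∈ Finset.Icc lo hi := by
  obtain ⟨y, hy, hyx⟩ := Finset.mem_image.mp h
  have hy' := Finset.mem_Icc.mp hy
  have hyx' : y = x :=
    hinj (Set.mem_Icc.mpr ⟨by omega, by omega⟩) (Set.mem_Icc.mpr ⟨hx1, hx2⟩) hyx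
  exact hyx' ▸ hy

private lemma stmt4_img_eq {π : ℕ → ℕ} {S : Set ℕ} (hinj : Set.InjOn π S) {s t : Finset ℕ}
    (hs : ↑s ⊆ S) (hsub : s.image π ⊆ t) (hc : t.card ≤ s.card) : s.image π = t :=
  Finset.eq_of_subset_of_card_le hsub
    (by rw [Finset.card_image_of_injOn (hinj.mono hs)]; exact hc)

theorem stmt4 (k : ℕ) (hk : 4 ≤ k) (π : ℕ → ℕ) (hπ : OneLine k π)
    (a b c d : ℕ) (ha : 1 ≤ a) (hab : a < b) (hbc : b < c) (hcd : c < d) (hd : d ≤ k)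
    (hac : GpiEdge k π a c) (hbd : GpiEdge k π b d) :
    GpiEdge k π a b ∧ GpiEdge k π a c ∧ GpiEdge k π a d ∧
      GpiEdge k π b c ∧ GpiEdge k π b d ∧ GpiEdge k π c d := by
  obtain ⟨hbij, -⟩ := hπ
  have hinj : Set.InjOn π (Set.Icc 1 (k - 1)) := hbij.injOn
  obtain ⟨p, hp1, hpk, hpim⟩ := hac
  obtain ⟨r, hr1, hrk, hrim⟩ := hbd
  -- image of the intersection of the two position blocks
  have hinterim :
      ((Finset.Icc p (p + (c - a) - 1)) ∩ (Finset.Icc r (r + (d - b) - 1))).image π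
        = Finset.Icc b (c - 1) := by
    apply Finset.Subset.antisymm
    · intro v hv
      obtain ⟨x, hx, rfl⟩ := Finset.mem_image.mp hv
      rw [Finset.mem_inter] at hx
      have h1 : π x ∈ Finset.Icc a (c - 1) := by
        rw [← hpim]; exact Finset.mem_image_of_mem π hx.1
      have h2 : π x ∈ Finset.Icc b (d - 1) := by
        rw [← hrim]; exact Finset.mem_image_of_mem π hx.2
      rw [Finset.mem_Icc] at h1 h2 ⊢; omega
    · intro v hv
      rw [Finset.mem_Icc] at hv
      have h1 : v ∈ (Finset.Icc p (p + (c - a) - 1)).image π := by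
        rw [hpim, Finset.mem_Icc]; omega
      obtain ⟨x, hx, rfl⟩ := Finset.mem_image.mp h1
      have hx' := Finset.mem_Icc.mp hx
      have h2 : x ∈ Finset.Icc r (r + (d - b) - 1) := by
        refine stmt4_mem_of_img hinj (by omega) (by omega) (by omega) (by omega) ?_
        rw [hrim, Finset.mem_Icc]; omega
      exact Finset.mem_image_of_mem π (Finset.mem_inter.mpr ⟨hx, h2⟩)
  -- cardinality of the intersection
  have hcardI :
      ((Finset.Icc p (p + (c - a) - 1)) ∩ (Finset.Icc r (r + (d - b) - 1))).card = c - b := by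
    have hs : (↑((Finset.Icc p (p + (c - a) - 1)) ∩ (Finset.Icc r (r + (d - b) - 1))) : Set ℕ)
        ⊆ Set.Icc 1 (k - 1) := by
      intro x hx
      have hx1 : x ∈ Finset.Icc p (p + (c - a) - 1) :=
        Finset.mem_inter.mp (by exact_mod_cast hx) |>.1
      rw [Finset.mem_Icc] at hx1; rw [Set.mem_Icc]; omega
    have h := Finset.card_image_of_injOn (hinj.mono hs)
    rw [hinterim, Nat.card_Icc] at h
    omega
  -- the intersection is nonempty
  have hx0 : ∃ x, (p ≤ x ∧ x ≤ p + (c - a) - 1) ∧ (r ≤ x ∧ x ≤ r + (d - b) - 1) := by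
    have hb : b ∈ ((Finset.Icc p (p + (c - a) - 1)) ∩ (Finset.Icc r (r + (d - b) - 1))).image π := by
      rw [hinterim, Finset.mem_Icc]; omega
    obtain ⟨x, hx, -⟩ := Finset.mem_image.mp hb
    rw [Finset.mem_inter, Finset.mem_Icc, Finset.mem_Icc] at hx
    exact ⟨x, hx⟩
  obtain ⟨x0, hx01, hx02⟩ := hx0
  -- no containment between the two position blocks
  have hnc1 : ¬ (p ≤ r ∧ r + (d - b) - 1 ≤ p + (c - a) - 1) := by
    rintro ⟨h1, h2⟩
    have hsub : Finset.Icc r (r + (d - b) - 1) ⊆ Finset.Icc p (p + (c - a) - 1) := by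
      intro x hx; rw [Finset.mem_Icc] at hx ⊢; omega
    have himsub : Finset.Icc b (d - 1) ⊆ Finset.Icc a (c - 1) := by
      rw [← hpim, ← hrim]; exact Finset.image_subset_image hsub
    have hmem : d - 1 ∈ Finset.Icc b (d - 1) := Finset.mem_Icc.mpr ⟨by omega, le_refl _⟩
    have := Finset.mem_Icc.mp (himsub hmem)
    omega
  have hnc2 : ¬ (r ≤ p ∧ p + (c - a) - 1 ≤ r + (d - b) - 1) := by
    rintro ⟨h1, h2⟩
    have hsub : Finset.Icc p (p + (c - a) - 1) ⊆ Finset.Icc r (r + (d - b) - 1) := by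
      intro x hx; rw [Finset.mem_Icc] at hx ⊢; omega
    have himsub : Finset.Icc a (c - 1) ⊆ Finset.Icc b (d - 1) := by
      rw [← hpim, ← hrim]; exact Finset.image_subset_image hsub
    have hmem : a ∈ Finset.Icc a (c - 1) := Finset.mem_Icc.mpr ⟨le_refl _, by omega⟩
    have := Finset.mem_Icc.mp (himsub hmem)
    omega
  rcases le_or_gt p r with hpr | hpr
  · -- Case A : block of P1 starts first
    have hq12 : p + (c - a) - 1 ≤ r + (d - b) - 1 := by
      by_contra h; exact hnc1 ⟨hpr, by omega⟩
    have hintereq :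
        (Finset.Icc p (p + (c - a) - 1)) ∩ (Finset.Icc r (r + (d - b) - 1))
          = Finset.Icc r (p + (c - a) - 1) := by
      ext x; simp only [Finset.mem_inter, Finset.mem_Icc]; omega
    have hrval : r = p + (b - a) := by
      rw [hintereq, Nat.card_Icc] at hcardI; omega
    refine ⟨⟨p, hp1, by omega, ?_⟩, ⟨p, hp1, hpk, hpim⟩, ⟨p, hp1, by omega, ?_⟩,
      ⟨r, hr1, by omega, ?_⟩, ⟨r, hr1, hrk, hrim⟩, ⟨p + (c - a), by omega, by omega, ?_⟩⟩
    · -- edge (a,b) at positions Icc p (r-1)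
      refine stmt4_img_eq hinj ?_ ?_ ?_
      · rw [Finset.coe_Icc]; intro x hx; rw [Set.mem_Icc] at hx ⊢; omega
      · intro v hv
        obtain ⟨x, hx, rfl⟩ := Finset.mem_image.mp hv
        rw [Finset.mem_Icc] at hx
        have h1 : π x ∈ Finset.Icc a (c - 1) := by
          rw [← hpim]; exact Finset.mem_image_of_mem π (Finset.mem_Icc.mpr ⟨by omega, by omega⟩)
        have h2 : π x ∉ Finset.Icc b (d - 1) := by
          intro h
          have hxin : x ∈ Finset.Icc r (r + (d - b) - 1) := by
            refine stmt4_mem_of_img hinj (by omega) (by omega) (by omega) (by omega) ?_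
            rw [hrim]; exact h
          rw [Finset.mem_Icc] at hxin; omega
        rw [Finset.mem_Icc] at h1 h2 ⊢; omega
      · rw [Nat.card_Icc, Nat.card_Icc]; omega
    · -- edge (a,d) : union of the two blocks
      have hu : Finset.Icc p (p + (d - a) - 1)
          = (Finset.Icc p (p + (c - a) - 1)) ∪ (Finset.Icc r (r + (d - b) - 1)) := by
        ext x; simp only [Finset.mem_union, Finset.mem_Icc]; omega
      rw [hu, Finset.image_union, hpim, hrim]
      ext v; simp only [Finset.mem_union, Finset.mem_Icc]; omega
    · -- edge (b,c) : intersection of the two blocks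
      have he : Finset.Icc r (r + (c - b) - 1)
          = (Finset.Icc p (p + (c - a) - 1)) ∩ (Finset.Icc r (r + (d - b) - 1)) := by
        rw [hintereq]; congr 1; omega
      rw [he, hinterim]
    · -- edge (c,d) at positions Icc (p+(c-a)) (r+(d-b)-1)
      refine stmt4_img_eq hinj ?_ ?_ ?_
      · rw [Finset.coe_Icc]; intro x hx; rw [Set.mem_Icc] at hx ⊢; omega
      · intro v hv
        obtain ⟨x, hx, rfl⟩ := Finset.mem_image.mp hv
        rw [Finset.mem_Icc] at hx
        have h1 : π x ∈ Finset.Icc b (d - 1) := by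
          rw [← hrim]; exact Finset.mem_image_of_mem π (Finset.mem_Icc.mpr ⟨by omega, by omega⟩)
        have h2 : π x ∉ Finset.Icc a (c - 1) := by
          intro h
          have hxin : x ∈ Finset.Icc p (p + (c - a) - 1) := by
            refine stmt4_mem_of_img hinj (by omega) (by omega) (by omega) (by omega) ?_
            rw [hpim]; exact h
          rw [Finset.mem_Icc] at hxin; omega
        rw [Finset.mem_Icc] at h1 h2 ⊢; omega
      · rw [Nat.card_Icc, Nat.card_Icc]; omega
  · -- Case B : block of P2 starts first
    have hq21 : r + (d - b) - 1 ≤ p + (c - a) - 1 := by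
      by_contra h; exact hnc2 ⟨by omega, by omega⟩
    have hintereq :
        (Finset.Icc p (p + (c - a) - 1)) ∩ (Finset.Icc r (r + (d - b) - 1))
          = Finset.Icc p (r + (d - b) - 1) := by
      ext x; simp only [Finset.mem_inter, Finset.mem_Icc]; omega
    have hpval : p = r + (d - c) := by
      rw [hintereq, Nat.card_Icc] at hcardI; omega
    refine ⟨⟨r + (d - b), by omega, by omega, ?_⟩, ⟨p, hp1, hpk, hpim⟩, ⟨r, hr1, by omega, ?_⟩,
      ⟨p, hp1, by omega, ?_⟩, ⟨r, hr1, hrk, hrim⟩, ⟨r, hr1, by omega, ?_⟩⟩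
    · -- edge (a,b) at positions Icc (r+(d-b)) (p+(c-a)-1)
      refine stmt4_img_eq hinj ?_ ?_ ?_
      · rw [Finset.coe_Icc]; intro x hx; rw [Set.mem_Icc] at hx ⊢; omega
      · intro v hv
        obtain ⟨x, hx, rfl⟩ := Finset.mem_image.mp hv
        rw [Finset.mem_Icc] at hx
        have h1 : π x ∈ Finset.Icc a (c - 1) := by
          rw [← hpim]; exact Finset.mem_image_of_mem π (Finset.mem_Icc.mpr ⟨by omega, by omega⟩)
        have h2 : π x ∉ Finset.Icc b (d - 1) := by
          intro h
          have hxin : x ∈ Finset.Icc r (r + (d - b) - 1) := by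
            refine stmt4_mem_of_img hinj (by omega) (by omega) (by omega) (by omega) ?_
            rw [hrim]; exact h
          rw [Finset.mem_Icc] at hxin; omega
        rw [Finset.mem_Icc] at h1 h2 ⊢; omega
      · rw [Nat.card_Icc, Nat.card_Icc]; omega
    · -- edge (a,d) : union of the two blocks
      have hu : Finset.Icc r (r + (d - a) - 1)
          = (Finset.Icc p (p + (c - a) - 1)) ∪ (Finset.Icc r (r + (d - b) - 1)) := by
        ext x; simp only [Finset.mem_union, Finset.mem_Icc]; omega
      rw [hu, Finset.image_union, hpim, hrim]
      ext v; simp only [Finset.mem_union, Finset.mem_Icc]; omega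
    · -- edge (b,c) : intersection of the two blocks
      have he : Finset.Icc p (p + (c - b) - 1)
          = (Finset.Icc p (p + (c - a) - 1)) ∩ (Finset.Icc r (r + (d - b) - 1)) := by
        rw [hintereq]; congr 1; omega
      rw [he, hinterim]
    · -- edge (c,d) at positions Icc r (p-1)
      refine stmt4_img_eq hinj ?_ ?_ ?_
      · rw [Finset.coe_Icc]; intro x hx; rw [Set.mem_Icc] at hx ⊢; omega
      · intro v hv
        obtain ⟨x, hx, rfl⟩ := Finset.mem_image.mp hv
        rw [Finset.mem_Icc] at hx
        have h1 : π x ∈ Finset.Icc b (d - 1) := by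
          rw [← hrim]; exact Finset.mem_image_of_mem π (Finset.mem_Icc.mpr ⟨by omega, by omega⟩)
        have h2 : π x ∉ Finset.Icc a (c - 1) := by
          intro h
          have hxin : x ∈ Finset.Icc p (p + (c - a) - 1) := by
            refine stmt4_mem_of_img hinj (by omega) (by omega) (by omega) (by omega) ?_
            rw [hpim]; exact h
          rw [Finset.mem_Icc] at hxin; omega
        rw [Finset.mem_Icc] at h1 h2 ⊢; omega
      · rw [Nat.card_Icc, Nat.card_Icc]; omega


end
end

section
/- Let k ≥ 4 and π ∈ 𝕊_{k−1}. Call an edge {i,j} of G_π with i < j a diagonal if it is not a polygon edge, i.e. not of the form {i,i+1} and not equal to {1,k}; say two diagonals {i,j} (i<j) and {a,b} (a<b) cross if a < i < b < j or i < a < j < b. If G_π is not the complete graph K_k and G_π has at least one diagonal (i.e. G_π is not just the cycle consisting of the polygon edges), then G_π contains a diagonal that is not crossed by any edge of G_π. -/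
open Finset

attribute [local instance] Classical.propDecidable

noncomputable section

/-- An edge `{i,j}` of `G_π` (with `i < j`) is a diagonal if it is not a polygon edge. -/
def IsDiag (k : ℕ) (π : ℕ → ℕ) (i j : ℕ) : Prop :=
  1 ≤ i ∧ i < j ∧ j ≤ k ∧ GpiEdge k π i j ∧ j ≠ i + 1 ∧ ¬(i = 1 ∧ j = k)

/-- The chords `{i,j}` and `{a,b}` (with `i < j`, `a < b`) cross. -/
def Crosses (i j a b : ℕ) : Prop :=
  (a < i ∧ i < b ∧ b < j) ∨ (i < a ∧ a < j ∧ j < b)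

namespace Stmt5Aux

/-- `[s,t]` occurs as a set of consecutive entries of `π`. -/
def Blk (k : ℕ) (π : ℕ → ℕ) (s t : ℕ) : Prop :=
  ∃ p q, 1 ≤ p ∧ p ≤ q ∧ q ≤ k - 1 ∧ (Finset.Icc p q).image π = Finset.Icc s t

variable {k : ℕ} {π : ℕ → ℕ}

lemma inj' (h : OneLine k π) : ∀ x y, 1 ≤ x → x ≤ k-1 → 1 ≤ y → y ≤ k-1 → π x = π y → x = y :=
  fun x y hx1 hx2 hy1 hy2 hxy =>
    h.1.injOn (Set.mem_Icc.mpr ⟨hx1, hx2⟩) (Set.mem_Icc.mpr ⟨hy1, hy2⟩) hxy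

lemma maps (h : OneLine k π) : ∀ x, 1 ≤ x → x ≤ k-1 → 1 ≤ π x ∧ π x ≤ k-1 :=
  fun x h1 h2 => Set.mem_Icc.mp (h.1.mapsTo (Set.mem_Icc.mpr ⟨h1, h2⟩))

lemma surj (h : OneLine k π) : ∀ v, 1 ≤ v → v ≤ k-1 → ∃ x, 1 ≤ x ∧ x ≤ k-1 ∧ π x = v := by
  intro v h1 h2
  obtain ⟨x, hx, hxv⟩ := h.1.surjOn (Set.mem_Icc.mpr ⟨h1, h2⟩)
  exact ⟨x, (Set.mem_Icc.mp hx).1, (Set.mem_Icc.mp hx).2, hxv⟩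

lemma blk_down {p q s t : ℕ} (hb : (Finset.Icc p q).image π = Finset.Icc s t) :
    ∀ x, p ≤ x → x ≤ q → s ≤ π x ∧ π x ≤ t := by
  intro x h1 h2
  have : π x ∈ Finset.Icc s t := hb ▸ Finset.mem_image_of_mem π (Finset.mem_Icc.mpr ⟨h1, h2⟩)
  exact Finset.mem_Icc.mp this

lemma blk_up {p q s t : ℕ} (hb : (Finset.Icc p q).image π = Finset.Icc s t) :
    ∀ v, s ≤ v → v ≤ t → ∃ x, p ≤ x ∧ x ≤ q ∧ π x = v := by
  intro v h1 h2
  have hv : v ∈ (Finset.Icc p q).image π := by rw [hb]; exact Finset.mem_Icc.mpr ⟨h1, h2⟩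
  obtain ⟨x, hx, hxv⟩ := Finset.mem_image.mp hv
  exact ⟨x, (Finset.mem_Icc.mp hx).1, (Finset.mem_Icc.mp hx).2, hxv⟩

lemma blk_singleton (h : OneLine k π) (v : ℕ) (h1 : 1 ≤ v) (h2 : v ≤ k-1) : Blk k π v v := by
  obtain ⟨x, hx1, hx2, hxv⟩ := surj h v h1 h2
  exact ⟨x, x, hx1, le_refl x, hx2, by
    rw [Finset.Icc_self, Finset.image_singleton, hxv, Finset.Icc_self]⟩

lemma blk_full (h : OneLine k π) (hk : 2 ≤ k) : Blk k π 1 (k-1) := by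
  refine ⟨1, k-1, le_refl 1, by omega, le_refl _, ?_⟩
  ext v
  simp only [Finset.mem_image, Finset.mem_Icc]
  constructor
  · rintro ⟨x, ⟨hx1, hx2⟩, rfl⟩
    exact maps h x hx1 hx2
  · rintro ⟨hv1, hv2⟩
    obtain ⟨x, hx1, hx2, hxv⟩ := surj h v hv1 hv2
    exact ⟨x, ⟨hx1, hx2⟩, hxv⟩

lemma blk_ops (h : OneLine k π) {s1 t1 s2 t2 : ℕ}
    (h1 : Blk k π s1 t1) (h2 : Blk k π s2 t2)
    (o1 : s1 < s2) (o2 : s2 ≤ t1) (o3 : t1 < t2) :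
    Blk k π s2 t1 ∧ Blk k π s1 t2 ∧ Blk k π s1 (s2 - 1) ∧ Blk k π (t1 + 1) t2 := by
  obtain ⟨p1, q1, hp1, hpq1, hq1, him1⟩ := h1
  obtain ⟨p2, q2, hp2, hpq2, hq2, him2⟩ := h2
  have d1 := blk_down him1
  have u1 := blk_up him1
  have d2 := blk_down him2
  have u2 := blk_up him2
  have inj := inj' h
  -- a common position
  obtain ⟨x, hx1, hx2, hxv⟩ := u1 s2 (le_of_lt o1) o2
  obtain ⟨y, hy1, hy2, hyv⟩ := u2 s2 le_rfl (by omega)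
  have hxy : x = y := inj x y (by omega) (by omega) (by omega) (by omega) (hxv.trans hyv.symm)
  -- positions are not nested
  have hnn1 : ¬ (p2 ≤ p1 ∧ q1 ≤ q2) := by
    rintro ⟨ha, hb⟩
    obtain ⟨z, hz1, hz2, hzv⟩ := u1 s1 le_rfl (by omega)
    have := d2 z (by omega) (by omega)
    omega
  have hnn2 : ¬ (p1 ≤ p2 ∧ q2 ≤ q1) := by
    rintro ⟨ha, hb⟩
    obtain ⟨z, hz1, hz2, hzv⟩ := u2 t2 (by omega) le_rfl
    have := d1 z (by omega) (by omega)
    omega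
  have hcase : (p1 < p2 ∧ q1 < q2 ∧ p2 ≤ q1 ∧ p1 ≤ q2) ∨
      (p2 < p1 ∧ q2 < q1 ∧ p1 ≤ q2 ∧ p2 ≤ q1) := by omega
  rcases hcase with ⟨c1, c2, c3, c4⟩ | ⟨c1, c2, c3, c4⟩
  · refine ⟨⟨p2, q1, by omega, by omega, by omega, ?_⟩,
      ⟨p1, q2, by omega, by omega, by omega, ?_⟩,
      ⟨p1, p2 - 1, by omega, by omega, by omega, ?_⟩,
      ⟨q1 + 1, q2, by omega, by omega, by omega, ?_⟩⟩
    · -- intersection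
      ext v
      simp only [Finset.mem_image, Finset.mem_Icc]
      constructor
      · rintro ⟨z, ⟨hz1, hz2⟩, rfl⟩
        have A := d1 z (by omega) (by omega)
        have B := d2 z (by omega) (by omega)
        omega
      · rintro ⟨hv1, hv2⟩
        obtain ⟨z, hz1, hz2, hzv⟩ := u1 v (by omega) (by omega)
        obtain ⟨w, hw1, hw2, hwv⟩ := u2 v (by omega) (by omega)
        have : z = w := inj z w (by omega) (by omega) (by omega) (by omega) (hzv.trans hwv.symm)
        exact ⟨z, ⟨by omega, by omega⟩, hzv⟩
    · -- union
      ext v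
      simp only [Finset.mem_image, Finset.mem_Icc]
      constructor
      · rintro ⟨z, ⟨hz1, hz2⟩, rfl⟩
        rcases le_or_gt z q1 with hz | hz
        · have A := d1 z (by omega) (by omega); omega
        · have B := d2 z (by omega) (by omega); omega
      · rintro ⟨hv1, hv2⟩
        rcases le_or_gt v t1 with hv | hv
        · obtain ⟨z, hz1, hz2, hzv⟩ := u1 v (by omega) (by omega)
          exact ⟨z, ⟨by omega, by omega⟩, hzv⟩
        · obtain ⟨z, hz1, hz2, hzv⟩ := u2 v (by omega) (by omega)
          exact ⟨z, ⟨by omega, by omega⟩, hzv⟩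
    · -- left difference
      ext v
      simp only [Finset.mem_image, Finset.mem_Icc]
      constructor
      · rintro ⟨z, ⟨hz1, hz2⟩, rfl⟩
        have A := d1 z (by omega) (by omega)
        have hlt : ¬ s2 ≤ π z := by
          intro hc
          obtain ⟨w, hw1, hw2, hwv⟩ := u2 (π z) hc (by omega)
          have : z = w := inj z w (by omega) (by omega) (by omega) (by omega) hwv.symm
          omega
        omega
      · rintro ⟨hv1, hv2⟩
        obtain ⟨z, hz1, hz2, hzv⟩ := u1 v (by omega) (by omega)
        have hzlt : z < p2 := by
          by_contra hc
          have := d2 z (by omega) (by omega)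
          omega
        exact ⟨z, ⟨by omega, by omega⟩, hzv⟩
    · -- right difference
      ext v
      simp only [Finset.mem_image, Finset.mem_Icc]
      constructor
      · rintro ⟨z, ⟨hz1, hz2⟩, rfl⟩
        have B := d2 z (by omega) (by omega)
        have hlt : ¬ π z ≤ t1 := by
          intro hc
          obtain ⟨w, hw1, hw2, hwv⟩ := u1 (π z) (by omega) hc
          have : z = w := inj z w (by omega) (by omega) (by omega) (by omega) hwv.symm
          omega
        omega
      · rintro ⟨hv1, hv2⟩
        obtain ⟨z, hz1, hz2, hzv⟩ := u2 v (by omega) (by omega)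
        have hzgt : q1 < z := by
          by_contra hc
          have := d1 z (by omega) (by omega)
          omega
        exact ⟨z, ⟨by omega, by omega⟩, hzv⟩
  · refine ⟨⟨p1, q2, by omega, by omega, by omega, ?_⟩,
      ⟨p2, q1, by omega, by omega, by omega, ?_⟩,
      ⟨q2 + 1, q1, by omega, by omega, by omega, ?_⟩,
      ⟨p2, p1 - 1, by omega, by omega, by omega, ?_⟩⟩
    · -- intersection
      ext v
      simp only [Finset.mem_image, Finset.mem_Icc]
      constructor
      · rintro ⟨z, ⟨hz1, hz2⟩, rfl⟩
        have A := d1 z (by omega) (by omega)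
        have B := d2 z (by omega) (by omega)
        omega
      · rintro ⟨hv1, hv2⟩
        obtain ⟨z, hz1, hz2, hzv⟩ := u1 v (by omega) (by omega)
        obtain ⟨w, hw1, hw2, hwv⟩ := u2 v (by omega) (by omega)
        have : z = w := inj z w (by omega) (by omega) (by omega) (by omega) (hzv.trans hwv.symm)
        exact ⟨z, ⟨by omega, by omega⟩, hzv⟩
    · -- union
      ext v
      simp only [Finset.mem_image, Finset.mem_Icc]
      constructor
      · rintro ⟨z, ⟨hz1, hz2⟩, rfl⟩
        rcases le_or_gt z q2 with hz | hz
        · have B := d2 z (by omega) (by omega); omega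
        · have A := d1 z (by omega) (by omega); omega
      · rintro ⟨hv1, hv2⟩
        rcases le_or_gt v t1 with hv | hv
        · obtain ⟨z, hz1, hz2, hzv⟩ := u1 v (by omega) (by omega)
          exact ⟨z, ⟨by omega, by omega⟩, hzv⟩
        · obtain ⟨z, hz1, hz2, hzv⟩ := u2 v (by omega) (by omega)
          exact ⟨z, ⟨by omega, by omega⟩, hzv⟩
    · -- left difference : values [s1, s2-1], positions [q2+1, q1]
      ext v
      simp only [Finset.mem_image, Finset.mem_Icc]
      constructor
      · rintro ⟨z, ⟨hz1, hz2⟩, rfl⟩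
        have A := d1 z (by omega) (by omega)
        have hlt : ¬ s2 ≤ π z := by
          intro hc
          obtain ⟨w, hw1, hw2, hwv⟩ := u2 (π z) hc (by omega)
          have : z = w := inj z w (by omega) (by omega) (by omega) (by omega) hwv.symm
          omega
        omega
      · rintro ⟨hv1, hv2⟩
        obtain ⟨z, hz1, hz2, hzv⟩ := u1 v (by omega) (by omega)
        have hzgt : q2 < z := by
          by_contra hc
          have := d2 z (by omega) (by omega)
          omega
        exact ⟨z, ⟨by omega, by omega⟩, hzv⟩
    · -- right difference : values [t1+1, t2], positions [p2, p1-1]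
      ext v
      simp only [Finset.mem_image, Finset.mem_Icc]
      constructor
      · rintro ⟨z, ⟨hz1, hz2⟩, rfl⟩
        have B := d2 z (by omega) (by omega)
        have hlt : ¬ π z ≤ t1 := by
          intro hc
          obtain ⟨w, hw1, hw2, hwv⟩ := u1 (π z) (by omega) hc
          have : z = w := inj z w (by omega) (by omega) (by omega) (by omega) hwv.symm
          omega
        omega
      · rintro ⟨hv1, hv2⟩
        obtain ⟨z, hz1, hz2, hzv⟩ := u2 v (by omega) (by omega)
        have hzlt : z < p1 := by
          by_contra hc
          have := d1 z (by omega) (by omega)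
          omega
        exact ⟨z, ⟨by omega, by omega⟩, hzv⟩

lemma blk_edge (h : OneLine k π) (hk : 2 ≤ k) {i j : ℕ} (hi : 1 ≤ i) (hij : i < j) (hj : j ≤ k) :
    GpiEdge k π i j ↔ Blk k π i (j-1) := by
  constructor
  · rintro ⟨a, ha1, ha2, him⟩
    exact ⟨a, a + (j-i) - 1, ha1, by omega, by omega, him⟩
  · rintro ⟨p, q, hp1, hpq, hq, him⟩
    have hinj : Set.InjOn π ↑(Finset.Icc p q) := by
      intro x hx y hy hxy
      simp only [Finset.coe_Icc, Set.mem_Icc] at hx hy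
      exact inj' h x y (by omega) (by omega) (by omega) (by omega) hxy
    have h1 : ((Finset.Icc p q).image π).card = (Finset.Icc p q).card :=
      Finset.card_image_of_injOn hinj
    rw [him, Nat.card_Icc, Nat.card_Icc] at h1
    refine ⟨p, hp1, by omega, ?_⟩
    have hq' : p + (j - i) - 1 = q := by omega
    rw [hq']
    exact him

/-- The hypothesis that every diagonal of `G_π` is crossed, in interval form. -/
def AllCrossed (k : ℕ) (π : ℕ → ℕ) : Prop :=
  ∀ s t, 1 ≤ s → s < t → t ≤ k-1 → ¬(s = 1 ∧ t = k-1) → Blk k π s t →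
    ∃ a b, 1 ≤ a ∧ a ≤ b ∧ b ≤ k - 1 ∧ Blk k π a b ∧
      ((a < s ∧ s ≤ b ∧ b < t) ∨ (s < a ∧ a ≤ t ∧ t < b))

lemma grow (h : OneLine k π) (HC : AllCrossed k π) :
    ∀ μ s t, 1 ≤ s → s < t → t ≤ k-1 → ¬(s = 1 ∧ t = k-1) → Blk k π s t →
      k - 1 - (t - s) ≤ μ →
      ∃ m i, 2 ≤ m ∧ m ≤ k-2 ∧ Blk k π 1 m ∧ 2 ≤ i ∧ i ≤ m ∧ Blk k π i (k-1) := by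
  intro μ
  induction μ with
  | zero =>
    intro s t hs hst ht hprop hB hμ
    exfalso; omega
  | succ μ IH =>
    intro s t hs hst ht hprop hB hμ
    obtain ⟨a, b, ha, hab, hbk, hBab, hor⟩ := HC s t hs hst ht hprop hB
    rcases hor with ⟨g1, g2, g3⟩ | ⟨g1, g2, g3⟩
    · by_cases hfull : a = 1 ∧ t = k-1
      · obtain ⟨ha1, ht1⟩ := hfull
        refine ⟨b, s, by omega, by omega, ?_, by omega, by omega, ?_⟩
        · rw [← ha1]; exact hBab
        · rw [← ht1]; exact hB
      · have hU : Blk k π a t := (blk_ops h hBab hB g1 g2 g3).2.1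
        exact IH a t (by omega) (by omega) ht hfull hU (by omega)
    · by_cases hfull : s = 1 ∧ b = k-1
      · obtain ⟨hs1, hb1⟩ := hfull
        refine ⟨t, a, by omega, by omega, ?_, by omega, by omega, ?_⟩
        · rw [← hs1]; exact hB
        · rw [← hb1]; exact hBab
      · have hU : Blk k π s b := (blk_ops h hB hBab g1 g2 g3).2.1
        exact IH s b hs (by omega) hbk hfull hU (by omega)

lemma seeds (hk : 4 ≤ k) (h : OneLine k π) (HC : AllCrossed k π)
    (hd : ∃ s t, 1 ≤ s ∧ s < t ∧ t ≤ k-1 ∧ ¬(s = 1 ∧ t = k-1) ∧ Blk k π s t) :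
    Blk k π 1 (k-2) ∧ Blk k π 2 (k-1) := by
  obtain ⟨s, t, hs, hst, ht, hprop, hB⟩ := hd
  obtain ⟨m, i, hm2, hmk, hBm, hi2, him, hBi⟩ :=
    grow h HC (k-1) s t hs hst ht hprop hB (by omega)
  set Pref := (Finset.Icc 2 (k-2)).filter (fun m => Blk k π 1 m) with hPref
  set Suf := (Finset.Icc 2 (k-2)).filter (fun i => Blk k π i (k-1)) with hSuf
  have hmP : m ∈ Pref := by
    exact Finset.mem_filter.mpr ⟨Finset.mem_Icc.mpr ⟨hm2, hmk⟩, hBm⟩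
  have hiS : i ∈ Suf := by
    exact Finset.mem_filter.mpr ⟨Finset.mem_Icc.mpr ⟨hi2, by omega⟩, hBi⟩
  have hPne : Pref.Nonempty := ⟨m, hmP⟩
  have hSne : Suf.Nonempty := ⟨i, hiS⟩
  set ms := Pref.max' hPne with hmsdef
  set is := Suf.min' hSne with hisdef
  obtain ⟨⟨hms2, hmsk⟩, hBms⟩ : (2 ≤ ms ∧ ms ≤ k-2) ∧ Blk k π 1 ms := by
    have := Finset.max'_mem Pref hPne
    rcases Finset.mem_filter.mp this with ⟨hI, hBl⟩
    exact ⟨Finset.mem_Icc.mp hI, hBl⟩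
  obtain ⟨⟨his2, hisk⟩, hBis⟩ : (2 ≤ is ∧ is ≤ k-2) ∧ Blk k π is (k-1) := by
    have := Finset.min'_mem Suf hSne
    rcases Finset.mem_filter.mp this with ⟨hI, hBl⟩
    exact ⟨Finset.mem_Icc.mp hI, hBl⟩
  have hiim : is ≤ ms :=
    le_trans (Finset.min'_le _ i hiS) (le_trans him (Finset.le_max' _ m hmP))
  have hSle : ∀ a, 2 ≤ a → a ≤ k-2 → Blk k π a (k-1) → is ≤ a := by
    intro a h1 h2 h3
    apply Finset.min'_le
    exact Finset.mem_filter.mpr ⟨Finset.mem_Icc.mpr ⟨h1, h2⟩, h3⟩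
  have hPge : ∀ b, 2 ≤ b → b ≤ k-2 → Blk k π 1 b → b ≤ ms := by
    intro b h1 h2 h3
    apply Finset.le_max'
    exact Finset.mem_filter.mpr ⟨Finset.mem_Icc.mpr ⟨h1, h2⟩, h3⟩
  have his2' : is = 2 := by
    by_contra hne
    have hD : Blk k π 1 (is - 1) :=
      (blk_ops h hBms hBis (by omega) (by omega) (by omega)).2.2.1
    obtain ⟨a, b, ha, hab, hbk, hBab, hor⟩ :=
      HC 1 (is-1) le_rfl (by omega) (by omega) (by omega) hD
    rcases hor with ⟨g1, g2, g3⟩ | ⟨g1, g2, g3⟩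
    · omega
    · by_cases hb : b = k - 1
      · rw [hb] at hBab
        have := hSle a (by omega) (by omega) hBab
        omega
      · have hU : Blk k π a (k-1) :=
          (blk_ops h hBab hBis (by omega) (by omega) (by omega)).2.1
        have := hSle a (by omega) (by omega) hU
        omega
  have hmsk' : ms = k - 2 := by
    by_contra hne
    have hD : Blk k π (ms+1) (k-1) :=
      (blk_ops h hBms hBis (by omega) (by omega) (by omega)).2.2.2
    obtain ⟨a, b, ha, hab, hbk, hBab, hor⟩ :=
      HC (ms+1) (k-1) (by omega) (by omega) le_rfl (by omega) hD
    rcases hor with ⟨g1, g2, g3⟩ | ⟨g1, g2, g3⟩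
    · by_cases ha1 : a = 1
      · rw [ha1] at hBab
        have := hPge b (by omega) (by omega) hBab
        omega
      · have hU : Blk k π 1 b :=
          (blk_ops h hBms hBab (by omega) (by omega) (by omega)).2.1
        have := hPge b (by omega) (by omega) hU
        omega
    · omega
  constructor
  · rw [← hmsk']; exact hBms
  · rw [← his2']; exact hBis

lemma suffix_step (hk : 4 ≤ k) (h : OneLine k π) (HC : AllCrossed k π) {c : ℕ}
    (hc2 : 2 ≤ c) (hck : c ≤ k - 3) (hB : Blk k π c (k-1)) : Blk k π (c+1) (k-1) := by
  have exit1 : ∀ u, 1 ≤ u → u < c → Blk k π u c → Blk k π (c+1) (k-1) := by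
    intro u hu1 hu2 hBu
    exact (blk_ops h hBu hB hu2 le_rfl (by omega)).2.2.2
  by_cases hE0 : Blk k π (c+1) (k-1)
  · exact hE0
  set Z := (Finset.Icc (c+2) (k-2)).filter (fun z => Blk k π (c+1) z) with hZdef
  by_cases hZe : Z.Nonempty
  · set z1 := Z.max' hZe with hz1def
    obtain ⟨⟨hz1a, hz1b⟩, hM⟩ : (c+2 ≤ z1 ∧ z1 ≤ k-2) ∧ Blk k π (c+1) z1 := by
      have := Finset.max'_mem Z hZe
      rcases Finset.mem_filter.mp this with ⟨hI, hBl⟩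
      exact ⟨Finset.mem_Icc.mp hI, hBl⟩
    have hzmax : ∀ v, c+2 ≤ v → v ≤ k-2 → Blk k π (c+1) v → v ≤ z1 := by
      intro v h1 h2 h3
      apply Finset.le_max'
      exact Finset.mem_filter.mpr ⟨Finset.mem_Icc.mpr ⟨h1, h2⟩, h3⟩
    have resolveR : ∀ u v, c+1 < u → u ≤ z1 → z1 < v → v ≤ k-1 → Blk k π u v →
        Blk k π (c+1) (k-1) := by
      intro u v r1 r2 r3 r4 hUV
      have hU : Blk k π (c+1) v := (blk_ops h hM hUV r1 r2 r3).2.1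
      by_cases hv : v = k-1
      · rw [← hv]; exact hU
      · exact absurd (hzmax v (by omega) (by omega) hU) (by omega)
    have resolveL : ∀ u v, 1 ≤ u → u < c → c+1 ≤ v → v < z1 → Blk k π u v →
        Blk k π (c+1) (k-1) := by
      intro u v r1 r2 r3 r4 hUV
      have hD : Blk k π u (c+1-1) := (blk_ops h hUV hM (by omega) r3 r4).2.2.1
      have hc' : c + 1 - 1 = c := by omega
      rw [hc'] at hD
      exact exit1 u r1 r2 hD
    obtain ⟨u, v, hu1, huv, hvk, hBuv, hor⟩ :=
      HC (c+1) z1 (by omega) (by omega) (by omega) (by omega) hM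
    rcases hor with ⟨g1, g2, g3⟩ | ⟨g1, g2, g3⟩
    · by_cases hu : u < c
      · exact resolveL u v hu1 hu g2 g3 hBuv
      · have huc : u = c := by omega
        rw [huc] at hBuv
        have hG : Blk k π c z1 := (blk_ops h hBuv hM (by omega) g2 g3).2.1
        obtain ⟨u', v', hu1', huv', hvk', hBuv', hor'⟩ :=
          HC c z1 (by omega) (by omega) (by omega) (by omega) hG
        rcases hor' with ⟨f1, f2, f3⟩ | ⟨f1, f2, f3⟩
        · by_cases hv' : v' = c
          · rw [hv'] at hBuv'
            exact exit1 u' hu1' f1 hBuv'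
          · exact resolveL u' v' hu1' f1 (by omega) f3 hBuv'
        · by_cases hu' : u' = c + 1
          · rw [hu'] at hBuv'
            by_cases hv' : v' = k - 1
            · rw [← hv']; exact hBuv'
            · exact absurd (hzmax v' (by omega) (by omega) hBuv') (by omega)
          · exact resolveR u' v' (by omega) f2 f3 hvk' hBuv'
    · exact resolveR u v g1 g2 g3 hvk hBuv
  · set Y := (Finset.Icc (c+1) (k-1)).filter (fun y => Blk k π c y) with hYdef
    have hYne : Y.Nonempty := ⟨k-1, by
      exact Finset.mem_filter.mpr ⟨Finset.mem_Icc.mpr ⟨by omega, le_rfl⟩, hB⟩⟩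
    set y0 := Y.min' hYne with hy0def
    obtain ⟨⟨hy0a, hy0b⟩, hy0B⟩ : (c+1 ≤ y0 ∧ y0 ≤ k-1) ∧ Blk k π c y0 := by
      have := Finset.min'_mem Y hYne
      rcases Finset.mem_filter.mp this with ⟨hI, hBl⟩
      exact ⟨Finset.mem_Icc.mp hI, hBl⟩
    have hymin : ∀ v, c+1 ≤ v → v ≤ k-1 → Blk k π c v → y0 ≤ v := by
      intro v h1 h2 h3
      apply Finset.min'_le
      exact Finset.mem_filter.mpr ⟨Finset.mem_Icc.mpr ⟨h1, h2⟩, h3⟩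
    obtain ⟨a, b, ha, hab, hbk, hBab, hor⟩ :=
      HC c y0 (by omega) (by omega) (by omega) (by omega) hy0B
    rcases hor with ⟨g1, g2, g3⟩ | ⟨g1, g2, g3⟩
    · have hbc : b = c := by
        by_contra hbc
        have hI : Blk k π c b := (blk_ops h hBab hy0B g1 g2 g3).1
        have := hymin b (by omega) (by omega) hI
        omega
      rw [hbc] at hBab
      exact exit1 a ha g1 hBab
    · have hD : Blk k π c (a-1) := (blk_ops h hy0B hBab g1 g2 g3).2.2.1
      have hac : a = c + 1 := by
        by_contra hac
        have := hymin (a-1) (by omega) (by omega) hD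
        omega
      rw [hac] at hBab
      by_cases hbN : b = k-1
      · rw [← hbN]; exact hBab
      · exfalso
        exact hZe ⟨b, by
          exact Finset.mem_filter.mpr ⟨Finset.mem_Icc.mpr ⟨by omega, by omega⟩, hBab⟩⟩

lemma suffixes (hk : 4 ≤ k) (h : OneLine k π) (HC : AllCrossed k π)
    (seed2 : Blk k π 2 (k-1)) :
    ∀ c, 2 ≤ c → c ≤ k-1 → Blk k π c (k-1) := by
  have key : ∀ d c, 2 ≤ c → c ≤ k-1 → c ≤ 2 + d → Blk k π c (k-1) := by
    intro d
    induction d with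
    | zero =>
      intro c h1 h2 h3
      have : c = 2 := by omega
      rw [this]; exact seed2
    | succ d IH =>
      intro c h1 h2 h3
      by_cases hc : c ≤ 2 + d
      · exact IH c h1 h2 hc
      · have hc3 : c = 3 + d := by omega
        have hprev : Blk k π (c-1) (k-1) := IH (c-1) (by omega) (by omega) (by omega)
        by_cases hck : c = k - 1
        · rw [hck]; exact blk_singleton h (k-1) (by omega) le_rfl
        · have hstep := suffix_step hk h HC (c := c-1) (by omega) (by omega) hprev
          have hce : c - 1 + 1 = c := by omega
          rw [hce] at hstep
          exact hstep
  intro c h1 h2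
  exact key c c h1 h2 (by omega)

lemma prefixes (hk : 4 ≤ k) (h : OneLine k π)
    (hsuf : ∀ c, 2 ≤ c → c ≤ k-1 → Blk k π c (k-1))
    (seed1 : Blk k π 1 (k-2)) :
    ∀ e, 1 ≤ e → e ≤ k-1 → Blk k π 1 e := by
  have key : ∀ d e, 1 ≤ e → e ≤ k-1 → k-1 ≤ e + d → Blk k π 1 e := by
    intro d
    induction d with
    | zero =>
      intro e h1 h2 h3
      have : e = k-1 := by omega
      rw [this]; exact blk_full h (by omega)
    | succ d IH =>
      intro e h1 h2 h3
      by_cases he : e = k-1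
      · rw [he]; exact blk_full h (by omega)
      · by_cases he2 : e = k-2
        · rw [he2]; exact seed1
        · have hP : Blk k π 1 (e+1) := IH (e+1) (by omega) (by omega) (by omega)
          have hS : Blk k π (e+1) (k-1) := hsuf (e+1) (by omega) (by omega)
          have hD : Blk k π 1 (e+1-1) := (blk_ops h hP hS (by omega) le_rfl (by omega)).2.2.1
          have hce : e + 1 - 1 = e := by omega
          rw [hce] at hD
          exact hD
  intro e h1 h2
  exact key k e h1 h2 (by omega)

lemma allBlk (hk : 4 ≤ k) (h : OneLine k π) (HC : AllCrossed k π)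
    (hd : ∃ s t, 1 ≤ s ∧ s < t ∧ t ≤ k-1 ∧ ¬(s = 1 ∧ t = k-1) ∧ Blk k π s t) :
    ∀ s t, 1 ≤ s → s ≤ t → t ≤ k-1 → Blk k π s t := by
  obtain ⟨seed1, seed2⟩ := seeds hk h HC hd
  have hsuf := suffixes hk h HC seed2
  have hpre := prefixes hk h hsuf seed1
  intro s t h1 h2 h3
  by_cases hs1 : s = 1
  · rw [hs1]; exact hpre t (by omega) h3
  · by_cases htk : t = k-1
    · rw [htk]; exact hsuf s (by omega) (by omega)
    · exact (blk_ops h (hpre t (by omega) h3) (hsuf s (by omega) (by omega))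
        (by omega) h2 (by omega)).1

end Stmt5Aux


theorem stmt5 (k : ℕ) (hk : 4 ≤ k) (π : ℕ → ℕ) (hπ : OneLine k π)
    (hnotcomplete : ∃ i j, 1 ≤ i ∧ i < j ∧ j ≤ k ∧ ¬ GpiEdge k π i j)
    (hdiag : ∃ i j, IsDiag k π i j) :
    ∃ i j, IsDiag k π i j ∧
      ∀ a b, 1 ≤ a → a < b → b ≤ k → GpiEdge k π a b → ¬ Crosses i j a b := by
  by_contra hcon
  push_neg at hcon
  have HC : Stmt5Aux.AllCrossed k π := by
    intro s t h1 h2 h3 h4 h5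
    have hedge : GpiEdge k π s (t+1) :=
      (Stmt5Aux.blk_edge hπ (by omega) h1 (by omega) (by omega)).mpr
        (by simp only [Nat.add_sub_cancel]; exact h5)
    have hIsDiag : IsDiag k π s (t+1) :=
      ⟨h1, by omega, by omega, hedge, by omega, by
        rintro ⟨hh1, hh2⟩; exact h4 ⟨hh1, by omega⟩⟩
    obtain ⟨a, b, ha, hab, hbk, hEab, hcr⟩ := hcon s (t+1) hIsDiag
    have hBab : Stmt5Aux.Blk k π a (b-1) :=
      (Stmt5Aux.blk_edge hπ (by omega) ha hab hbk).mp hEab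
    refine ⟨a, b-1, ha, by omega, by omega, hBab, ?_⟩
    rcases hcr with ⟨x1, x2, x3⟩ | ⟨x1, x2, x3⟩
    · left; exact ⟨x1, by omega, by omega⟩
    · right; exact ⟨x1, by omega, by omega⟩
  have hd : ∃ s t, 1 ≤ s ∧ s < t ∧ t ≤ k-1 ∧ ¬(s = 1 ∧ t = k-1) ∧ Stmt5Aux.Blk k π s t := by
    obtain ⟨i, j, d1, d2, d3, d4, d5, d6⟩ := hdiag
    refine ⟨i, j-1, d1, by omega, by omega, ?_,
      (Stmt5Aux.blk_edge hπ (by omega) d1 d2 d3).mp d4⟩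
    rintro ⟨e1, e2⟩; exact d6 ⟨e1, by omega⟩
  obtain ⟨i, j, n1, n2, n3, n4⟩ := hnotcomplete
  exact n4 ((Stmt5Aux.blk_edge hπ (by omega) n1 n2 n3).mpr
    (Stmt5Aux.allBlk hk hπ HC hd i (j-1) n1 (by omega) (by omega)))


end
end

section
/- Let k ≥ 2 and π ∈ 𝕊_{k−1}, and let (S₁, S₂, …, S_k) be the maximal sorted family associated with the inverse permutation π⁻¹. Then for all 1 ≤ i < j ≤ k, the pair {i,j} is an edge of G_π if and only if |S_i \ S_j| = |S_j \ S_i| = 1 (equivalently, e_{S_i} − e_{S_j} = e_s − e_t for some s ≠ t in {1,…,k}, i.e. the segment [e_{S_i}, e_{S_j}] is an edge of the hypersimplex Δ_{k,m}). Geometrically, G_π equals the intersection of the simplex σ_{π⁻¹} with the 1-skeleton of Δ_{k,m}, where m−1 is the number of descents of π. -/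
open Finset

attribute [local instance] Classical.propDecidable

noncomputable section

def pe' (k : ℕ) (π : ℕ → ℕ) (w : ℕ) : ℕ := if w = k then k else π w

def memChar (k : ℕ) (π : ℕ → ℕ) (m w : ℕ) : Prop :=
  (π (w-1) < pe' k π w ∧ π (w-1) ≤ m ∧ m < pe' k π w) ∨
  (pe' k π w ≤ π (w-1) ∧ (π (w-1) ≤ m ∨ m < pe' k π w))

lemma oneBlock {V : Finset ℕ} (h : V.Nonempty)
    (h1 : (V.filter fun v => v+1 ∉ V).card = 1) :
    V = Finset.Icc (V.min' h) (V.max' h) := by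
  have hmax : V.max' h ∈ V.filter fun v => v+1 ∉ V := by
    simp only [Finset.mem_filter]
    exact ⟨V.max'_mem h, fun hc => absurd (V.le_max' _ hc) (by omega)⟩
  have huniq : ∀ v ∈ V.filter fun v => v+1 ∉ V, v = V.max' h := by
    obtain ⟨x, hx⟩ := Finset.card_eq_one.mp h1
    rw [hx] at hmax ⊢
    intro v hv
    simp only [Finset.mem_singleton] at hv hmax
    omega
  have key : ∀ n z, z = V.min' h + n → z ≤ V.max' h → z ∈ V := by
    intro n
    induction n with
    | zero => intro z hz _; rw [hz]; simpa using V.min'_mem h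
    | succ n ih =>
      intro z hz hzm
      by_contra hzV
      have hz1 : z - 1 ∈ V := ih (z-1) (by omega) (by omega)
      have hzf : z - 1 ∈ V.filter fun v => v+1 ∉ V := by
        simp only [Finset.mem_filter]
        refine ⟨hz1, ?_⟩
        have hze : z - 1 + 1 = z := by omega
        rw [hze]; exact hzV
      have := huniq _ hzf
      have := V.le_max' _ hz1
      omega
  ext z
  simp only [Finset.mem_Icc]
  constructor
  · intro hz; exact ⟨V.min'_le _ hz, V.le_max' _ hz⟩
  · intro ⟨h1', h2'⟩; exact key (z - V.min' h) z (by omega) h2'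

theorem stmt6 (k : ℕ) (hk : 2 ≤ k) (π τ : ℕ → ℕ) (hπ : OneLine k π) (hτ : OneLine k τ)
    (hinv : ∀ p ∈ Finset.Icc 1 (k - 1), τ (π p) = p) :
    ∀ i j, 1 ≤ i → i < j → j ≤ k →
      (GpiEdge k π i j ↔
        ((sortedFam k τ (i - 1)) \ (sortedFam k τ (j - 1))).card = 1 ∧
        ((sortedFam k τ (j - 1)) \ (sortedFam k τ (i - 1))).card = 1) := by
  obtain ⟨⟨hπmaps, hπinj, -⟩, hπ0⟩ := hπ
  obtain ⟨⟨hτmaps, hτinj, -⟩, hτ0⟩ := hτ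
  have hz : π 0 = 0 := hπ0 0 (by simp)
  have hπb : ∀ p, 1 ≤ p → p ≤ k-1 → 1 ≤ π p ∧ π p ≤ k-1 := by
    intro p h1 h2
    exact Set.mem_Icc.mp (hπmaps (Set.mem_Icc.mpr ⟨h1, h2⟩))
  have hτb : ∀ p, 1 ≤ p → p ≤ k-1 → 1 ≤ τ p ∧ τ p ≤ k-1 := by
    intro p h1 h2
    exact Set.mem_Icc.mp (hτmaps (Set.mem_Icc.mpr ⟨h1, h2⟩))
  have hinv' : ∀ p, 1 ≤ p → p ≤ k-1 → τ (π p) = p := by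
    intro p h1 h2; exact hinv p (Finset.mem_Icc.mpr ⟨h1, h2⟩)
  have hπτ : ∀ v, 1 ≤ v → v ≤ k-1 → π (τ v) = v := by
    intro v h1 h2
    have htv := hτb v h1 h2
    have hptv := hπb (τ v) htv.1 htv.2
    have h3 : τ (π (τ v)) = τ v := hinv' (τ v) htv.1 htv.2
    exact hτinj (Set.mem_Icc.mpr ⟨hptv.1, hptv.2⟩) (Set.mem_Icc.mpr ⟨h1, h2⟩) h3
  have hπinj' : ∀ p r, 1 ≤ p → p ≤ k-1 → 1 ≤ r → r ≤ k-1 → π p = π r → p = r := by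
    intro p r h1 h2 h3 h4 h5
    exact hπinj (Set.mem_Icc.mpr ⟨h1, h2⟩) (Set.mem_Icc.mpr ⟨h3, h4⟩) h5
  have huniq : ∀ m w, 1 ≤ m → m ≤ k-1 → 1 ≤ w → w ≤ k-1 → π w = m → w = τ m := by
    intro m w _ _ hw1 hw2 hpw
    have h := hinv' w hw1 hw2
    rw [hpw] at h
    exact h.symm
  have hadj : ∀ v, v ∈ adjInvF k τ ↔ (1 ≤ v ∧ v ≤ k-2 ∧ π (v+1) < π v) := by
    intro v
    unfold adjInvF
    simp only [Finset.mem_filter, Finset.mem_Icc]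
    constructor
    · rintro ⟨⟨h1, h2⟩, p, hp, r, hr, hpr, hτp, hτr⟩
      have hv1 : 1 ≤ v + 1 := by omega
      have hv2 : v + 1 ≤ k - 1 := by omega
      have hb1 := hπb (v+1) hv1 hv2
      have hb2 := hπb v (by omega) (by omega)
      have hep : p = π (v+1) := by
        apply hτinj (Set.mem_Icc.mpr ⟨hp.1, hp.2⟩) (Set.mem_Icc.mpr ⟨hb1.1, hb1.2⟩)
        rw [hτp, hinv' (v+1) hv1 hv2]
      have her : r = π v := by
        apply hτinj (Set.mem_Icc.mpr ⟨hr.1, hr.2⟩) (Set.mem_Icc.mpr ⟨hb2.1, hb2.2⟩)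
        rw [hτr, hinv' v (by omega) (by omega)]
      exact ⟨h1, h2, by omega⟩
    · rintro ⟨h1, h2, h3⟩
      have hv1 : 1 ≤ v + 1 := by omega
      have hv2 : v + 1 ≤ k - 1 := by omega
      have hb1 := hπb (v+1) hv1 hv2
      have hb2 := hπb v (by omega) (by omega)
      exact ⟨⟨h1, h2⟩, π (v+1), ⟨hb1.1, hb1.2⟩, π v,
        ⟨hb2.1, hb2.2⟩, h3, hinv' (v+1) hv1 hv2, hinv' v (by omega) (by omega)⟩
  -- base characterization
  have hbase : ∀ w, 1 ≤ w → w ≤ k →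
      (memChar k π 0 w ↔ (w = 1 ∨ ∃ v ∈ adjInvF k τ, w = v + 1)) := by
    intro w hw1 hwk
    by_cases hwk' : w = k
    · have hb : pe' k π w = k := by simp [pe', hwk']
      have ha := hπb (w-1) (by omega) (by omega)
      simp only [memChar, hb]
      constructor
      · intro h; omega
      · rintro (h | ⟨v, hv, h⟩)
        · omega
        · rw [hadj] at hv; omega
    · have hb : pe' k π w = π w := by simp [pe', hwk']
      simp only [memChar, hb]
      by_cases hw1' : w = 1
      · subst hw1'
        have hb1 := hπb 1 le_rfl (by omega)
        simp only [Nat.sub_self, hz]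
        constructor
        · intro _; exact Or.inl (by trivial)
        · intro _; omega
      · have ha := hπb (w-1) (by omega) (by omega)
        have hb1 := hπb w (by omega) (by omega)
        have hne : π (w-1) ≠ π w := by
          intro h
          have := hπinj' (w-1) w (by omega) (by omega) (by omega) (by omega) h
          omega
        constructor
        · intro h
          refine Or.inr ⟨w - 1, (hadj (w-1)).mpr ⟨by omega, by omega, ?_⟩, by omega⟩
          have hww : w - 1 + 1 = w := by omega
          rw [hww]; omega
        · rintro (h | ⟨v, hv, h⟩)
          · omega
          · rw [hadj] at hv
            have hvv : v = w - 1 := by omega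
            subst hvv
            have hww : w - 1 + 1 = w := by omega
            rw [hww] at hv
            omega
  -- step characterization
  have hstep : ∀ m w, m + 1 ≤ k - 1 → 1 ≤ w → w ≤ k →
      (memChar k π (m+1) w ↔ (w = τ (m+1) + 1 ∨ (memChar k π m w ∧ w ≠ τ (m+1)))) := by
    intro m w hm hw1 hwk
    have ht := hτb (m+1) (by omega) hm
    have hπt : π (τ (m+1)) = m + 1 := hπτ (m+1) (by omega) hm
    by_cases hwt : w = τ (m+1)
    · have hb : pe' k π w = m + 1 := by
        have hne : τ (m+1) ≠ k := by omega
        rw [hwt]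
        simp [pe', hne, hπt]
      have ha : π (w-1) ≠ m + 1 := by
        by_cases h0 : w = 1
        · simp [h0, hz]
        · intro h
          have := huniq (m+1) (w-1) (by omega) hm (by omega) (by omega) h
          omega
      simp only [memChar, hb]
      constructor
      · intro h; omega
      · rintro (h | ⟨-, h⟩) <;> omega
    · by_cases hwt1 : w = τ (m+1) + 1
      · have ha : π (w - 1) = m + 1 := by
          have hww : w - 1 = τ (m+1) := by omega
          rw [hww, hπt]
        simp only [memChar, ha]
        by_cases hwk' : w = k
        · have hb : pe' k π w = k := by simp [pe', hwk']
          rw [hb]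
          constructor
          · intro _; exact Or.inl hwt1
          · intro _; omega
        · have hb : pe' k π w = π w := by simp [pe', hwk']
          have hbne : π w ≠ m + 1 := by
            intro h
            have := huniq (m+1) w (by omega) hm (by omega) (by omega) h
            omega
          rw [hb]
          constructor
          · intro _; exact Or.inl hwt1
          · intro _; omega
      · have ha : π (w-1) ≠ m + 1 := by
          by_cases h0 : w = 1
          · simp [h0, hz]
          · intro h
            have := huniq (m+1) (w-1) (by omega) hm (by omega) (by omega) h
            omega
        have hbne : pe' k π w ≠ m + 1 := by
          by_cases hwk' : w = k
          · simp only [pe', if_pos hwk']; omega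
          · simp only [pe', if_neg hwk']
            intro h
            have := huniq (m+1) w (by omega) hm (by omega) (by omega) h
            omega
        simp only [memChar]
        constructor
        · intro h; refine Or.inr ⟨?_, hwt⟩; omega
        · rintro (h | ⟨h, -⟩) <;> omega
  -- explicit description of sortedFam
  have hSF : ∀ m, m ≤ k - 1 →
      sortedFam k τ m = (Finset.Icc 1 k).filter (fun w => memChar k π m w) := by
    intro m
    induction m with
    | zero =>
      intro _
      ext w
      simp only [sortedFam, Finset.mem_insert, Finset.mem_image, Finset.mem_filter,
        Finset.mem_Icc]
      constructor
      · rintro (rfl | ⟨v, hv, rfl⟩)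
        · exact ⟨⟨le_rfl, by omega⟩, (hbase 1 le_rfl (by omega)).mpr (Or.inl rfl)⟩
        · have hv' := (hadj v).mp hv
          exact ⟨⟨by omega, by omega⟩,
            (hbase (v+1) (by omega) (by omega)).mpr (Or.inr ⟨v, hv, rfl⟩)⟩
      · rintro ⟨⟨hw1, hwk⟩, hmc⟩
        rcases (hbase w hw1 hwk).mp hmc with h | ⟨v, hv, h⟩
        · exact Or.inl h
        · exact Or.inr ⟨v, hv, h.symm⟩
    | succ m ih =>
      intro hm
      have hm' : m ≤ k - 1 := by omega
      have ht := hτb (m+1) (by omega) hm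
      show insert (τ (m+1) + 1) ((sortedFam k τ m).erase (τ (m+1))) = _
      rw [ih hm']
      ext w
      simp only [Finset.mem_insert, Finset.mem_erase, Finset.mem_filter, Finset.mem_Icc]
      constructor
      · rintro (rfl | ⟨hne, ⟨hw1, hwk⟩, hmc⟩)
        · exact ⟨⟨by omega, by omega⟩,
            (hstep m (τ (m+1) + 1) hm (by omega) (by omega)).mpr (Or.inl rfl)⟩
        · exact ⟨⟨hw1, hwk⟩, (hstep m w hm hw1 hwk).mpr (Or.inr ⟨hmc, hne⟩)⟩
      · rintro ⟨⟨hw1, hwk⟩, hmc⟩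
        rcases (hstep m w hm hw1 hwk).mp hmc with h | ⟨h1, h2⟩
        · exact Or.inl h
        · exact Or.inr ⟨h2, ⟨hw1, hwk⟩, h1⟩
  -- translation lemmas (pure arithmetic)
  have htransA : ∀ m1 m2 w, m1 < m2 →
      ((memChar k π m1 w ∧ ¬ memChar k π m2 w) ↔
        ((m1 < pe' k π w ∧ pe' k π w ≤ m2) ∧ ¬(m1 < π (w-1) ∧ π (w-1) ≤ m2))) := by
    intro m1 m2 w h
    simp only [memChar]
    omega
  have htransB : ∀ m1 m2 w, m1 < m2 →
      ((memChar k π m2 w ∧ ¬ memChar k π m1 w) ↔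
        ((m1 < π (w-1) ∧ π (w-1) ≤ m2) ∧ ¬(m1 < pe' k π w ∧ pe' k π w ≤ m2))) := by
    intro m1 m2 w h
    simp only [memChar]
    omega
  -- the statement
  intro i j hi hij hjk
  have hi1 : i - 1 ≤ k - 1 := by omega
  have hj1 : j - 1 ≤ k - 1 := by omega
  have hij1 : i - 1 < j - 1 := by omega
  rw [hSF (i-1) hi1, hSF (j-1) hj1]
  set Vp : ℕ → Prop := fun v => 1 ≤ v ∧ v ≤ k-1 ∧ i ≤ π v ∧ π v ≤ j-1 with hVp
  set V : Finset ℕ := (Finset.Icc 1 (k-1)).filter (fun w => i ≤ π w ∧ π w ≤ j-1) with hV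
  have hVmem : ∀ v, v ∈ V ↔ Vp v := by
    intro v
    simp only [hV, hVp, Finset.mem_filter, Finset.mem_Icc, and_assoc]
  have hPe : ∀ w, 1 ≤ w → w ≤ k → ((i-1 < pe' k π w ∧ pe' k π w ≤ j-1) ↔ Vp w) := by
    intro w hw1 hwk
    simp only [pe', hVp]
    split_ifs with hwk'
    · omega
    · omega
  have hPa : ∀ w, 1 ≤ w → w ≤ k → ((i-1 < π (w-1) ∧ π (w-1) ≤ j-1) ↔ Vp (w-1)) := by
    intro w hw1 hwk
    by_cases h0 : w = 1
    · subst h0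
      simp only [Nat.sub_self, hz, hVp]
      omega
    · simp only [hVp]
      omega
  have hA : (Finset.Icc 1 k).filter (fun w => memChar k π (i-1) w) \
      (Finset.Icc 1 k).filter (fun w => memChar k π (j-1) w) =
      V.filter (fun w => ¬ Vp (w-1)) := by
    ext w
    simp only [Finset.mem_sdiff, Finset.mem_filter, Finset.mem_Icc, hVmem]
    constructor
    · rintro ⟨⟨⟨hw1, hwk⟩, h1⟩, h2⟩
      have h2' : ¬ memChar k π (j-1) w := fun hc => h2 ⟨⟨hw1, hwk⟩, hc⟩
      have hkey := (htransA (i-1) (j-1) w hij1).mp ⟨h1, h2'⟩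
      exact ⟨(hPe w hw1 hwk).mp hkey.1, fun hc => hkey.2 ((hPa w hw1 hwk).mpr hc)⟩
    · rintro ⟨hVw, hn⟩
      have hw1 : 1 ≤ w := hVw.1
      have hwk : w ≤ k := by have := hVw.2.1; omega
      have hkey := (htransA (i-1) (j-1) w hij1).mpr
        ⟨(hPe w hw1 hwk).mpr hVw, fun hc => hn ((hPa w hw1 hwk).mp hc)⟩
      exact ⟨⟨⟨hw1, hwk⟩, hkey.1⟩, fun hc => hkey.2 hc.2⟩
  have hB : (Finset.Icc 1 k).filter (fun w => memChar k π (j-1) w) \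
      (Finset.Icc 1 k).filter (fun w => memChar k π (i-1) w) =
      (Finset.Icc 1 k).filter (fun w => Vp (w-1) ∧ ¬ Vp w) := by
    ext w
    simp only [Finset.mem_sdiff, Finset.mem_filter, Finset.mem_Icc]
    constructor
    · rintro ⟨⟨⟨hw1, hwk⟩, h1⟩, h2⟩
      have h2' : ¬ memChar k π (i-1) w := fun hc => h2 ⟨⟨hw1, hwk⟩, hc⟩
      have hkey := (htransB (i-1) (j-1) w hij1).mp ⟨h1, h2'⟩
      exact ⟨⟨hw1, hwk⟩, (hPa w hw1 hwk).mp hkey.1, fun hc => hkey.2 ((hPe w hw1 hwk).mpr hc)⟩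
    · rintro ⟨⟨hw1, hwk⟩, hp, hn⟩
      have hkey := (htransB (i-1) (j-1) w hij1).mpr
        ⟨(hPa w hw1 hwk).mpr hp, fun hc => hn ((hPe w hw1 hwk).mp hc)⟩
      exact ⟨⟨⟨hw1, hwk⟩, hkey.1⟩, fun hc => hkey.2 hc.2⟩
  have hBcard : ((Finset.Icc 1 k).filter (fun w => Vp (w-1) ∧ ¬ Vp w)).card =
      (V.filter (fun v => ¬ Vp (v+1))).card := by
    have himg : (Finset.Icc 1 k).filter (fun w => Vp (w-1) ∧ ¬ Vp w) =
        (V.filter (fun v => ¬ Vp (v+1))).image (· + 1) := by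
      ext w
      simp only [Finset.mem_filter, Finset.mem_image, Finset.mem_Icc, hVmem]
      constructor
      · rintro ⟨⟨hw1, hwk⟩, hvp, hnv⟩
        refine ⟨w - 1, ⟨hvp, ?_⟩, by omega⟩
        have hze : w - 1 + 1 = w := by omega
        rw [hze]; exact hnv
      · rintro ⟨v, ⟨hv, hnv⟩, rfl⟩
        have hv1 : 1 ≤ v := hv.1
        have hv2 : v ≤ k - 1 := hv.2.1
        refine ⟨⟨by omega, by omega⟩, ?_, hnv⟩
        have hze : v + 1 - 1 = v := by omega
        rw [hze]; exact hv
    rw [himg, Finset.card_image_of_injective _ (add_left_injective 1)]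
  have hVcard : V.card = j - i := by
    have himg : V = (Finset.Icc i (j-1)).image τ := by
      ext w
      simp only [hV, Finset.mem_filter, Finset.mem_Icc, Finset.mem_image]
      constructor
      · rintro ⟨⟨hw1, hwk⟩, hi', hj'⟩
        exact ⟨π w, ⟨hi', hj'⟩, hinv' w hw1 hwk⟩
      · rintro ⟨p, ⟨hp1, hp2⟩, rfl⟩
        have hp1' : 1 ≤ p := by omega
        have hp2' : p ≤ k - 1 := by omega
        have hb := hτb p hp1' hp2'
        have hπτp := hπτ p hp1' hp2'
        exact ⟨⟨hb.1, hb.2⟩, by omega, by omega⟩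
    rw [himg, Finset.card_image_of_injOn, Nat.card_Icc]
    · omega
    · intro x hx y hy hxy
      simp only [Finset.coe_Icc, Set.mem_Icc] at hx hy
      exact hτinj (Set.mem_Icc.mpr ⟨by omega, by omega⟩)
        (Set.mem_Icc.mpr ⟨by omega, by omega⟩) hxy
  rw [hA, hB, hBcard]
  constructor
  · rintro ⟨a, ha1, hak, him⟩
    have hJV : Finset.Icc a (a + (j-i) - 1) = V := by
      apply Finset.eq_of_subset_of_card_le
      · intro w hw
        rw [Finset.mem_Icc] at hw
        have hπw : π w ∈ Finset.Icc i (j-1) := by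
          rw [← him]
          exact Finset.mem_image_of_mem π (Finset.mem_Icc.mpr hw)
        rw [Finset.mem_Icc] at hπw
        simp only [hV, Finset.mem_filter, Finset.mem_Icc]
        exact ⟨⟨by omega, by omega⟩, hπw.1, hπw.2⟩
      · rw [hVcard, Nat.card_Icc]; omega
    constructor
    · have hsing : V.filter (fun w => ¬ Vp (w-1)) = {a} := by
        ext w
        simp only [Finset.mem_filter, Finset.mem_singleton]
        rw [show Vp (w-1) ↔ (w-1) ∈ V from (hVmem _).symm, ← hJV]
        simp only [Finset.mem_Icc]
        omega
      rw [hsing]; simp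
    · have hsing : V.filter (fun v => ¬ Vp (v+1)) = {a + (j-i) - 1} := by
        ext w
        simp only [Finset.mem_filter, Finset.mem_singleton]
        rw [show Vp (w+1) ↔ (w+1) ∈ V from (hVmem _).symm, ← hJV]
        simp only [Finset.mem_Icc]
        omega
      rw [hsing]; simp
  · rintro ⟨-, hB1⟩
    have hne : V.Nonempty := by
      rw [← Finset.card_pos, hVcard]; omega
    have hsame : V.filter (fun v => ¬ Vp (v+1)) = V.filter (fun v => v+1 ∉ V) := by
      apply Finset.filter_congr
      intro v _
      simp [hVmem]
    rw [hsame] at hB1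
    have hblock := oneBlock hne hB1
    set a := V.min' hne with haDef
    have hle : a ≤ V.max' hne := V.min'_le _ (V.max'_mem hne)
    have hmax : V.max' hne = a + (j-i) - 1 := by
      have h1 : (Finset.Icc a (V.max' hne)).card = j - i := by
        rw [← hblock, hVcard]
      rw [Nat.card_Icc] at h1
      omega
    have haV := V.min'_mem hne
    have hmaxV := V.max'_mem hne
    rw [hVmem] at haV hmaxV
    have hab : 1 ≤ a ∧ a ≤ k - 1 := ⟨haV.1, haV.2.1⟩
    have hmb : V.max' hne ≤ k - 1 := hmaxV.2.1
    refine ⟨a, hab.1, by omega, ?_⟩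
    have hIV : Finset.Icc a (a + (j-i) - 1) = V := by rw [hblock, hmax]
    rw [hIV]
    apply Finset.eq_of_subset_of_card_le
    · intro x hx
      simp only [Finset.mem_image] at hx
      obtain ⟨w, hw, rfl⟩ := hx
      simp only [hV, Finset.mem_filter, Finset.mem_Icc] at hw
      exact Finset.mem_Icc.mpr ⟨hw.2.1, hw.2.2⟩
    · rw [Finset.card_image_of_injOn, hVcard, Nat.card_Icc]
      · omega
      · intro x hx y hy hxy
        simp only [hV, Finset.coe_filter, Set.mem_setOf_eq, Finset.mem_Icc] at hx hy
        exact hπinj' x y hx.1.1 hx.1.2 hy.1.1 hy.1.2 hxy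

end
end

section
/- Let k ≥ 3 and let π ∈ 𝕊_{k−1} be a permutation with S(π) ≠ ∅, say |S(π)| = m−1, and let (S₁,…,S_k) be the maximal sorted family associated with π. Then #{i ∈ {1,…,k} : exactly one index l ∈ {1,…,k} satisfies i ∈ S_l} + #{i ∈ {1,…,k} : exactly one index l ∈ {1,…,k} satisfies i ∉ S_l} = ear(π). (Geometrically: the simplex σ_π = conv{e_{S₁},…,e_{S_k}} in the alcoved triangulation of the hypersimplex Δ_{k,m} is adjacent to exactly ear(π) facets of Δ_{k,m}.) -/
open Finset

attribute [local instance] Classical.propDecidable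

noncomputable section

/-!
Write `p v = posOf k π v` for the position of the value `v`, so that `p 0 = p k = 0`, and read
positions and values modulo `k`, the value `0 ≡ k` sitting at position `0`. Following `i` through
the moves `S_{l+1} = S_l - π_l + (π_l + 1)`, it enters at step `p (i - 1)` and leaves at step
`p i`, so `i ∈ S_l` exactly for `l` on the cyclic arc `(p (i - 1), p i]`: `i` lies in
`p i - p (i - 1) mod k` of the sets and outside `p (i - 1) - p i mod k` of them. Hence the left-hand
side counts the `v ∈ ℤ/k` with `p (v + 1) - p v = ±1`, while `ear π` counts the `t ∈ ℤ/k` with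
`π (t + 1) - π t = ±1`, and these agree because `p` and `π` are inverse permutations of `ℤ/k`.
-/

section CyclicAdjacency

variable {α : Type*} [AddCommGroup α] [Fintype α] [DecidableEq α]

theorem Equiv.Perm.card_apply_add_sub_apply_eq (e : Equiv.Perm α) (c d : α) :
    #{a | e (a + c) - e a = d} = #{b | e.symm (b + d) - e.symm b = c} := by
  refine card_equiv e fun a => ?_
  simp only [mem_filter, mem_univ, true_and]
  rw [Equiv.symm_apply_apply, sub_eq_iff_eq_add', sub_eq_iff_eq_add',
    Equiv.symm_apply_eq, eq_comm]

theorem Equiv.Perm.card_apply_sub_apply_add_eq (e : Equiv.Perm α) (c d : α) :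
    #{a | e a - e (a + c) = d} = #{b | e.symm b - e.symm (b + d) = c} := by
  refine card_equiv ((Equiv.addRight c).trans e) fun a => ?_
  simp only [mem_filter, mem_univ, true_and]
  rw [Equiv.trans_apply, Equiv.coe_addRight, Equiv.symm_apply_apply,
    sub_eq_iff_eq_add', sub_eq_iff_eq_add, add_comm c, add_left_inj, Equiv.eq_symm_apply]

end CyclicAdjacency

theorem card_pair_inter_pair {α : Type*} [DecidableEq α] {a b x y : α} (hxy : x ≠ y) :
    #(({a, b} : Finset α) ∩ {x, y})
      = (if x = a ∨ x = b then 1 else 0) + (if y = a ∨ y = b then 1 else 0) := by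
  rw [inter_comm, ← filter_mem_eq_inter, card_filter, sum_pair hxy]
  simp only [mem_insert, mem_singleton]

theorem card_filter_Icc_one_eq_sum_range (p : ℕ → Prop) [DecidablePred p] (m : ℕ) :
    #{t ∈ Icc 1 m | p t} = ∑ n ∈ range m, if p (n + 1) then 1 else 0 := by
  rw [card_filter, ← Ico_add_one_right_eq_Icc, sum_Ico_eq_sum_range, Nat.add_sub_cancel]
  simp only [add_comm 1]

theorem ZMod.val_natCast_sub_natCast {k a b : ℕ} (ha : a < k) (hb : b < k) :
    ((b : ZMod k) - a).val = if a ≤ b then b - a else b + k - a := by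
  split_ifs with hab
  · rw [← Nat.cast_sub hab, ZMod.val_natCast, Nat.mod_eq_of_lt (by omega)]
  · rw [show (b : ZMod k) - a = ((b + k - a : ℕ) : ZMod k) by
      rw [Nat.cast_sub (by omega), Nat.cast_add, ZMod.natCast_self, add_zero],
      ZMod.val_natCast, Nat.mod_eq_of_lt (by omega)]

theorem ZMod.natCast_sub_natCast_eq_one_iff {k a b : ℕ} (hk : 1 < k) (ha : a < k) (hb : b < k) :
    (b : ZMod k) - a = 1 ↔ b = a + 1 ∨ b + k = a + 1 := by
  rw [← ZMod.val_eq_one hk, ZMod.val_natCast_sub_natCast ha hb]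
  split_ifs <;> omega

section ZMod

variable {k : ℕ} [NeZero k]

theorem card_filter_range_natCast (p : ZMod k → Prop) [DecidablePred p] :
    #{n ∈ range k | p ((n : ℕ) : ZMod k)} = #{v | p v} := by
  refine card_nbij' (fun n => (n : ZMod k)) ZMod.val (fun n hn => ?_) (fun v hv => ?_)
    (fun n hn => ?_) (fun v _ => ZMod.natCast_zmod_val v)
  · simp_all
  · simpa using ⟨ZMod.val_lt v, by simpa using hv⟩
  · simp_all [ZMod.val_natCast, Nat.mod_eq_of_lt]

theorem card_filter_Icc_natCast_sub_one (p : ZMod k → Prop) [DecidablePred p] :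
    #{i ∈ Icc 1 k | p ((i - 1 : ℕ) : ZMod k)} = #{v | p v} := by
  rw [← card_filter_range_natCast]
  refine card_nbij' (· - 1) (· + 1) (fun i hi => ?_) (fun n hn => ?_) (fun i hi => ?_)
    (fun n _ => Nat.add_sub_cancel n 1)
  · simp only [coe_filter, mem_Icc, mem_range, Set.mem_ofPred_eq] at hi ⊢
    exact ⟨by omega, hi.2⟩
  · simp_all
  · simp only [coe_filter, mem_Icc, Set.mem_ofPred_eq] at hi
    exact Nat.sub_add_cancel hi.1.1

end ZMod

/-- `l` lies on the arc `(a, b]` of the cycle `0 → 1 → ⋯ → k - 1 → 0`; for `l ∈ [1, k]` the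
position `k` stands for `0`. -/
def InArc (a b l : ℕ) : Prop := if a ≤ b then a < l ∧ l ≤ b else l ≤ b ∨ a < l

theorem inArc_add_one_iff {a b l : ℕ} (hab : a ≠ b) :
    InArc a b (l + 1) ↔ a = l ∨ b ≠ l ∧ InArc a b l := by
  unfold InArc
  split_ifs <;> omega

theorem not_inArc_iff {a b l : ℕ} (hab : a ≠ b) : ¬InArc a b l ↔ InArc b a l := by
  unfold InArc
  split_ifs <;> omega

theorem card_filter_inArc {k a b : ℕ} [NeZero k] (ha : a < k) (hb : b < k) :
    #{l ∈ Icc 1 k | InArc a b l} = ((b : ZMod k) - a).val := by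
  rw [ZMod.val_natCast_sub_natCast ha hb]
  unfold InArc
  split_ifs with hab
  · rw [show ({l ∈ Icc 1 k | a < l ∧ l ≤ b} : Finset ℕ) = Ioc a b by
      ext l; simp only [mem_filter, mem_Icc, mem_Ioc]; omega, Nat.card_Ioc]
  · rw [show ({l ∈ Icc 1 k | l ≤ b ∨ a < l} : Finset ℕ) = Icc 1 k \ Ioc b a by
        ext l; simp only [mem_filter, mem_sdiff, mem_Icc, mem_Ioc]; omega,
      card_sdiff_of_subset fun l hl => by rw [mem_Ioc] at hl; rw [mem_Icc]; omega,
      Nat.card_Icc, Nat.card_Ioc]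
    omega

section Positions

variable {k : ℕ} {π : ℕ → ℕ} {v t : ℕ}

theorem posOf_spec (h : ∃ t ∈ Icc 1 (k - 1), π t = v) :
    posOf k π v ∈ Icc 1 (k - 1) ∧ π (posOf k π v) = v := by
  obtain ⟨t, ht, htv⟩ := h
  have hne : ({t ∈ Icc 1 (k - 1) | π t = v} : Finset ℕ).Nonempty := ⟨t, mem_filter.2 ⟨ht, htv⟩⟩
  rw [posOf, dif_pos hne]
  exact mem_filter.1 (min'_mem _ hne)

theorem posOf_eq_zero (h : ¬∃ t ∈ Icc 1 (k - 1), π t = v) : posOf k π v = 0 := by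
  rw [posOf, dif_neg]
  rintro ⟨t, ht⟩
  exact h ⟨t, mem_filter.1 ht⟩

theorem posOf_lt (hk : 0 < k) (v : ℕ) : posOf k π v < k := by
  by_cases h : ∃ t ∈ Icc 1 (k - 1), π t = v
  · have := mem_Icc.1 (posOf_spec h).1
    omega
  · rw [posOf_eq_zero h]
    exact hk

namespace OneLine

variable (hπ : OneLine k π)
include hπ

theorem apply_mem_Icc (ht : t ∈ Icc 1 (k - 1)) : π t ∈ Icc 1 (k - 1) := by
  simpa using hπ.1.mapsTo (by simpa using ht)

theorem apply_eq_zero (ht : t ∉ Icc 1 (k - 1)) : π t = 0 :=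
  hπ.2 t (by simpa using ht)

theorem apply_lt (hk : 0 < k) (t : ℕ) : π t < k := by
  by_cases ht : t ∈ Icc 1 (k - 1)
  · have := mem_Icc.1 (hπ.apply_mem_Icc ht)
    omega
  · rw [hπ.apply_eq_zero ht]
    exact hk

theorem posOf_of_notMem_Icc (hv : v ∉ Icc 1 (k - 1)) : posOf k π v = 0 :=
  posOf_eq_zero fun ⟨_, ht, htv⟩ => hv (htv ▸ hπ.apply_mem_Icc ht)

theorem posOf_spec_of_mem_Icc (hv : v ∈ Icc 1 (k - 1)) :
    posOf k π v ∈ Icc 1 (k - 1) ∧ π (posOf k π v) = v := by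
  obtain ⟨t, ht, htv⟩ := hπ.1.surjOn (by simpa using hv)
  exact posOf_spec ⟨t, by simpa using ht, htv⟩

theorem apply_posOf (hv : v < k) : π (posOf k π v) = v := by
  by_cases hv' : v ∈ Icc 1 (k - 1)
  · exact (hπ.posOf_spec_of_mem_Icc hv').2
  · have hv0 : v = 0 := by simp only [mem_Icc] at hv'; omega
    rw [hπ.posOf_of_notMem_Icc hv', hv0, hπ.apply_eq_zero (by simp)]

theorem posOf_apply (ht : t < k) : posOf k π (π t) = t := by
  by_cases ht' : t ∈ Icc 1 (k - 1)
  · obtain ⟨hmem, happ⟩ := posOf_spec ⟨t, ht', rfl⟩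
    exact hπ.1.injOn (by simpa using hmem) (by simpa using ht') happ
  · have ht0 : t = 0 := by simp only [mem_Icc] at ht'; omega
    rw [hπ.apply_eq_zero ht', ht0, hπ.posOf_of_notMem_Icc (by simp)]

theorem posOf_eq_iff (ht : t ∈ Icc 1 (k - 1)) : posOf k π v = t ↔ π t = v := by
  constructor
  · rintro rfl
    by_cases h : ∃ s ∈ Icc 1 (k - 1), π s = v
    · exact (posOf_spec h).2
    · rw [posOf_eq_zero h] at ht
      simp at ht
  · rintro rfl
    exact hπ.posOf_apply (by simp only [mem_Icc] at ht; omega)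

theorem apply_mod {n : ℕ} (hn : n ≤ k) : π (n % k) = π n := by
  rcases hn.lt_or_eq with hn | rfl
  · rw [Nat.mod_eq_of_lt hn]
  · rw [Nat.mod_self, hπ.apply_eq_zero (by simp),
      hπ.apply_eq_zero (by simp only [mem_Icc]; omega)]

theorem posOf_mod {n : ℕ} (hn : n ≤ k) : posOf k π (n % k) = posOf k π n := by
  rcases hn.lt_or_eq with hn | rfl
  · rw [Nat.mod_eq_of_lt hn]
  · rw [Nat.mod_self, hπ.posOf_of_notMem_Icc (by simp),
      hπ.posOf_of_notMem_Icc (by simp only [mem_Icc]; omega)]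

/-- `π` as a permutation of `ℤ/k`, the value `0` sitting at position `0`. -/
def toPerm [NeZero k] : Equiv.Perm (ZMod k) where
  toFun t := π t.val
  invFun v := posOf k π v.val
  left_inv t := by
    simp only [ZMod.val_natCast, Nat.mod_eq_of_lt (hπ.apply_lt (NeZero.pos k) _),
      hπ.posOf_apply (ZMod.val_lt t), ZMod.natCast_zmod_val]
  right_inv v := by
    simp only [ZMod.val_natCast, Nat.mod_eq_of_lt (posOf_lt (NeZero.pos k) _),
      hπ.apply_posOf (ZMod.val_lt v), ZMod.natCast_zmod_val]

theorem toPerm_natCast [NeZero k] {n : ℕ} (hn : n ≤ k) : hπ.toPerm n = π n := by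
  simp [toPerm, hπ.apply_mod hn]

theorem toPerm_symm_natCast [NeZero k] {n : ℕ} (hn : n ≤ k) :
    hπ.toPerm.symm n = posOf k π n := by
  simp [toPerm, hπ.posOf_mod hn]

theorem mem_adjInvF_iff {j : ℕ} :
    j ∈ adjInvF k π ↔ j ∈ Icc 1 (k - 2) ∧ posOf k π (j + 1) < posOf k π j := by
  simp only [adjInvF, mem_filter]
  refine and_congr_right fun hj => ?_
  replace hj := mem_Icc.1 hj
  constructor
  · rintro ⟨p, hp, r, hr, hpr, hpj, hrj⟩
    rwa [(hπ.posOf_eq_iff hp).2 hpj, (hπ.posOf_eq_iff hr).2 hrj]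
  · intro h
    obtain ⟨hp, hpj⟩ := hπ.posOf_spec_of_mem_Icc (v := j + 1) (mem_Icc.2 ⟨by omega, by omega⟩)
    obtain ⟨hr, hrj⟩ := hπ.posOf_spec_of_mem_Icc (v := j) (mem_Icc.2 ⟨by omega, by omega⟩)
    exact ⟨_, hp, _, hr, h, hpj, hrj⟩

theorem posOf_sub_one_ne (hk : 2 ≤ k) {i : ℕ} (hi : i ∈ Icc 1 k) :
    posOf k π (i - 1) ≠ posOf k π i := by
  intro h
  obtain ⟨hi1, hik⟩ := mem_Icc.1 hi
  have hprev := hπ.apply_posOf (v := i - 1) (by omega)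
  rw [h] at hprev
  rcases hik.lt_or_eq with hik | rfl
  · rw [hπ.apply_posOf hik] at hprev
    omega
  · rw [hπ.posOf_of_notMem_Icc (by simp only [mem_Icc]; omega), hπ.apply_eq_zero (by simp)]
      at hprev
    omega

theorem mem_sortedFam_zero_iff (hk : 2 ≤ k) {i : ℕ} (hi : i ∈ Icc 1 k) :
    i ∈ sortedFam k π 0 ↔ InArc (posOf k π (i - 1)) (posOf k π i) 1 := by
  obtain ⟨hi1, hik⟩ := mem_Icc.1 hi
  have hshift : (∃ j ∈ adjInvF k π, j + 1 = i) ↔ i - 1 ∈ adjInvF k π :=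
    ⟨fun ⟨j, hj, hji⟩ => by rwa [← hji, Nat.add_sub_cancel], fun h => ⟨i - 1, h, by omega⟩⟩
  have hpos {v : ℕ} (hv1 : 1 ≤ v) (hvk : v ≤ k - 1) : 1 ≤ posOf k π v :=
    (mem_Icc.1 (hπ.posOf_spec_of_mem_Icc (mem_Icc.2 ⟨hv1, hvk⟩)).1).1
  have hfirst : i = 1 → posOf k π (i - 1) = 0 := by
    rintro rfl
    exact hπ.posOf_of_notMem_Icc (by simp)
  have hlast : i = k → posOf k π i = 0 := by
    rintro rfl
    exact hπ.posOf_of_notMem_Icc (by simp only [mem_Icc]; omega)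
  have hprev : 2 ≤ i → 1 ≤ posOf k π (i - 1) := fun h => hpos (by omega) (by omega)
  have hcur : i ≤ k - 1 → 1 ≤ posOf k π i := hpos hi1
  have hne := hπ.posOf_sub_one_ne hk hi
  rw [sortedFam, mem_insert, mem_image, hshift, hπ.mem_adjInvF_iff, Nat.sub_add_cancel hi1,
    mem_Icc, InArc]
  split_ifs <;> omega

theorem mem_sortedFam_iff (hk : 2 ≤ k) {i : ℕ} (hi : i ∈ Icc 1 k) {l : ℕ} (hl : l ∈ Icc 1 k) :
    i ∈ sortedFam k π (l - 1) ↔ InArc (posOf k π (i - 1)) (posOf k π i) l := by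
  obtain ⟨hl1, hlk⟩ := mem_Icc.1 hl
  induction l, hl1 using Nat.le_induction with
  | base => exact hπ.mem_sortedFam_zero_iff hk hi
  | succ l hl1 ih =>
    obtain ⟨j, rfl⟩ : ∃ j, l = j + 1 := ⟨l - 1, by omega⟩
    have hl' : j + 1 ∈ Icc 1 (k - 1) := mem_Icc.2 ⟨hl1, by omega⟩
    have hsucc : i = π (j + 1) + 1 ↔ π (j + 1) = i - 1 := by
      have := (mem_Icc.1 hi).1
      omega
    rw [Nat.add_sub_cancel] at ih ⊢
    rw [sortedFam, mem_insert, mem_erase, ih (by simp only [mem_Icc]; omega) (by omega), hsucc,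
      ne_eq, inArc_add_one_iff (l := j + 1) (hπ.posOf_sub_one_ne hk hi), ne_eq,
      hπ.posOf_eq_iff hl', hπ.posOf_eq_iff hl', eq_comm (a := i)]

theorem card_filter_mem_sortedFam [NeZero k] (hk : 2 ≤ k) {i : ℕ} (hi : i ∈ Icc 1 k) :
    #{l ∈ Icc 1 k | i ∈ sortedFam k π (l - 1)}
      = (hπ.toPerm.symm ((i - 1 : ℕ) + 1) - hπ.toPerm.symm (i - 1 : ℕ)).val := by
  have hi' := mem_Icc.1 hi
  rw [filter_congr fun l hl => hπ.mem_sortedFam_iff hk hi hl,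
    card_filter_inArc (posOf_lt (by omega) _) (posOf_lt (by omega) _), ← Nat.cast_add_one,
    Nat.sub_add_cancel hi'.1, hπ.toPerm_symm_natCast hi'.2, hπ.toPerm_symm_natCast (by omega)]

theorem card_filter_notMem_sortedFam [NeZero k] (hk : 2 ≤ k) {i : ℕ} (hi : i ∈ Icc 1 k) :
    #{l ∈ Icc 1 k | i ∉ sortedFam k π (l - 1)}
      = (hπ.toPerm.symm (i - 1 : ℕ) - hπ.toPerm.symm ((i - 1 : ℕ) + 1)).val := by
  have hi' := mem_Icc.1 hi
  rw [filter_congr fun l hl => by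
      rw [hπ.mem_sortedFam_iff hk hi hl, not_inArc_iff (hπ.posOf_sub_one_ne hk hi)],
    card_filter_inArc (posOf_lt (by omega) _) (posOf_lt (by omega) _), ← Nat.cast_add_one,
    Nat.sub_add_cancel hi'.1, hπ.toPerm_symm_natCast hi'.2, hπ.toPerm_symm_natCast (by omega)]

theorem card_filter_card_mem_sortedFam_eq_one [NeZero k] (hk : 2 ≤ k) :
    #{i ∈ Icc 1 k | #{l ∈ Icc 1 k | i ∈ sortedFam k π (l - 1)} = 1}
      = #{v | hπ.toPerm.symm (v + 1) - hπ.toPerm.symm v = 1} := by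
  rw [← card_filter_Icc_natCast_sub_one]
  refine congrArg card (filter_congr fun i hi => ?_)
  rw [hπ.card_filter_mem_sortedFam hk hi, ZMod.val_eq_one (by omega)]

theorem card_filter_card_notMem_sortedFam_eq_one [NeZero k] (hk : 2 ≤ k) :
    #{i ∈ Icc 1 k | #{l ∈ Icc 1 k | i ∉ sortedFam k π (l - 1)} = 1}
      = #{v | hπ.toPerm.symm v - hπ.toPerm.symm (v + 1) = 1} := by
  rw [← card_filter_Icc_natCast_sub_one]
  refine congrArg card (filter_congr fun i hi => ?_)
  rw [hπ.card_filter_notMem_sortedFam hk hi, ZMod.val_eq_one (by omega)]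

/-- The boundary term of `ear` accounts for the two cyclic neighbours `π 1` and `π (k - 1)` of the
value `π 0 = π k = 0`. -/
theorem ear_eq_card_range (hk : 3 ≤ k) :
    ear k π = #{n ∈ range k | π (n + 1) = π n + 1 ∨ π (n + 1) + k = π n + 1}
      + #{n ∈ range k | π n = π (n + 1) + 1 ∨ π n + k = π (n + 1) + 1} := by
  obtain ⟨m, rfl⟩ : ∃ m, k = m + 2 := ⟨k - 2, by omega⟩
  have hbound {t : ℕ} (ht1 : 1 ≤ t) (htm : t ≤ m + 1) : 1 ≤ π t ∧ π t ≤ m + 1 := by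
    simpa using hπ.apply_mem_Icc (t := t) (by simp only [mem_Icc]; omega)
  have hne : π 1 ≠ π (m + 1) := fun h => by
    have := hπ.1.injOn (by simp) (by simp) h
    omega
  rw [ear, show m + 2 - 2 = m by omega, show m + 2 - 1 = m + 1 by omega,
    card_filter_Icc_one_eq_sum_range, card_pair_inter_pair hne, card_filter _ (range _),
    card_filter _ (range _), ← sum_add_distrib, sum_range_succ, sum_range_succ',
    hπ.apply_eq_zero (t := 0) (by simp), hπ.apply_eq_zero (t := m + 1 + 1) (by simp), add_assoc]
  refine congrArg₂ (· + ·) (sum_congr rfl fun n hn => ?_) ?_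
  · have := hbound (t := n + 1) (by omega) (by rw [mem_range] at hn; omega)
    have := hbound (t := n + 1 + 1) (by omega) (by rw [mem_range] at hn; omega)
    split_ifs <;> omega
  · have := hbound (t := 1) le_rfl (by omega)
    have := hbound (t := m + 1) (by omega) le_rfl
    simp only [zero_add, Nat.zero_ne_add_one, false_or]
    split_ifs <;> omega

theorem ear_eq_card_toPerm [NeZero k] (hk : 3 ≤ k) :
    ear k π = #{t | hπ.toPerm (t + 1) - hπ.toPerm t = 1}
      + #{t | hπ.toPerm t - hπ.toPerm (t + 1) = 1} := by
  rw [hπ.ear_eq_card_range hk, ← card_filter_range_natCast, ← card_filter_range_natCast]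
  have hlt := hπ.apply_lt (NeZero.pos k)
  congr 2 <;> refine filter_congr fun n hn => ?_ <;>
    rw [← Nat.cast_add_one, hπ.toPerm_natCast (by rw [mem_range] at hn; omega),
      hπ.toPerm_natCast (by rw [mem_range] at hn; omega),
      ZMod.natCast_sub_natCast_eq_one_iff (by omega) (hlt _) (hlt _)]

end OneLine

end Positions

theorem stmt7_general (k : ℕ) (hk : 3 ≤ k) (π : ℕ → ℕ) (hπ : OneLine k π) :
    ((Finset.Icc 1 k).filter fun i =>
        ((Finset.Icc 1 k).filter fun l => i ∈ sortedFam k π (l - 1)).card = 1).card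
      + ((Finset.Icc 1 k).filter fun i =>
          ((Finset.Icc 1 k).filter fun l => i ∉ sortedFam k π (l - 1)).card = 1).card
      = ear k π := by
  have : NeZero k := ⟨by omega⟩
  rw [hπ.card_filter_card_mem_sortedFam_eq_one (by omega),
    hπ.card_filter_card_notMem_sortedFam_eq_one (by omega), hπ.ear_eq_card_toPerm hk,
    Equiv.Perm.card_apply_add_sub_apply_eq, Equiv.Perm.card_apply_sub_apply_add_eq,
    Equiv.symm_symm]

theorem stmt7 (k : ℕ) (hk : 3 ≤ k) (π : ℕ → ℕ) (hπ : OneLine k π)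
    (hS : (adjInvF k π).Nonempty) :
    ((Finset.Icc 1 k).filter fun i =>
        ((Finset.Icc 1 k).filter fun l => i ∈ sortedFam k π (l - 1)).card = 1).card
      + ((Finset.Icc 1 k).filter fun i =>
          ((Finset.Icc 1 k).filter fun l => i ∉ sortedFam k π (l - 1)).card = 1).card
      = ear k π :=
  stmt7_general k hk π hπ
end
end

section
/- Let k ≥ 3 and let π ∈ 𝕊_{k−1} be a permutation with S(π) ≠ ∅, and let (S₁,…,S_k) be the maximal sorted family associated with π. Then every element i ∈ {1,…,k} belongs to at least two of the sets S₁,…,S_k and is omitted by at least two of them (geometrically: σ_π is an internal simplex of the alcoved triangulation of the hypersimplex, i.e. adjacent to no facet of the hypersimplex) if and only if both of the following hold: (1) for every i ∈ {1,…,k−2}, the entries i and i+1 are not adjacent in π (i.e. |π⁻¹(i) − π⁻¹(i+1)| ≠ 1); (2) {π₁, π_{k−1}} ∩ {1, k−1} = ∅. -/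
open Finset

attribute [local instance] Classical.propDecidable

noncomputable section

section MyAux

variable {k : ℕ} {π τ : ℕ → ℕ}

private lemma myPiTau (hπ : OneLine k π)
    (hinv : ∀ p ∈ Finset.Icc 1 (k - 1), τ (π p) = p) :
    ∀ v, 1 ≤ v → v ≤ k - 1 → π (τ v) = v := by
  intro v h1 h2
  obtain ⟨p, hp, hpv⟩ := hπ.1.surjOn (Set.mem_Icc.2 ⟨h1, h2⟩)
  obtain ⟨hp1, hp2⟩ := Set.mem_Icc.1 hp
  have hτv : τ v = p := by
    rw [← hpv]; exact hinv p (Finset.mem_Icc.2 ⟨hp1, hp2⟩)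
  rw [hτv, hpv]

private lemma myTauMem (hτ : OneLine k τ) :
    ∀ v, 1 ≤ v → v ≤ k - 1 → 1 ≤ τ v ∧ τ v ≤ k - 1 := fun v h1 h2 =>
  Set.mem_Icc.1 (hτ.1.mapsTo (Set.mem_Icc.2 ⟨h1, h2⟩))

/-- Arithmetic characterization of membership in the sorted family. -/
def memF (k : ℕ) (τ : ℕ → ℕ) (j v : ℕ) : Prop :=
  (v = 1 ∧ j < τ 1) ∨
  (2 ≤ v ∧ v ≤ k - 1 ∧
    ((τ v < τ (v - 1) ∧ (j < τ v ∨ τ (v - 1) ≤ j)) ∨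
     (τ (v - 1) < τ v ∧ τ (v - 1) ≤ j ∧ j < τ v))) ∨
  (v = k ∧ τ (k - 1) ≤ j)

private lemma myAdjInv (hπ : OneLine k π) (hτ : OneLine k τ)
    (hinv : ∀ p ∈ Finset.Icc 1 (k - 1), τ (π p) = p) (i : ℕ) :
    i ∈ adjInvF k π ↔ 1 ≤ i ∧ i ≤ k - 2 ∧ τ (i + 1) < τ i := by
  simp only [adjInvF, Finset.mem_filter, Finset.mem_Icc]
  constructor
  · rintro ⟨⟨hi1, hi2⟩, p, hp, r, hr, hpr, hp2, hr2⟩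
    have e1 : τ (i + 1) = p := by rw [← hp2]; exact hinv p (Finset.mem_Icc.2 hp)
    have e2 : τ i = r := by rw [← hr2]; exact hinv r (Finset.mem_Icc.2 hr)
    exact ⟨hi1, hi2, by omega⟩
  · rintro ⟨h1, h2, h3⟩
    have hk3 : 3 ≤ k := by omega
    have hA := myTauMem hτ (i + 1) (by omega) (by omega)
    have hB := myTauMem hτ i (by omega) (by omega)
    exact ⟨⟨h1, h2⟩, τ (i + 1), ⟨by omega, by omega⟩, τ i, ⟨by omega, by omega⟩, h3,
      myPiTau hπ hinv (i + 1) (by omega) (by omega),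
      myPiTau hπ hinv i (by omega) (by omega)⟩

private lemma myMemSorted (hk : 3 ≤ k) (hπ : OneLine k π) (hτ : OneLine k τ)
    (hinv : ∀ p ∈ Finset.Icc 1 (k - 1), τ (π p) = p) :
    ∀ j, j ≤ k - 1 → ∀ v, (v ∈ sortedFam k π j ↔ memF k τ j v) := by
  intro j
  induction j with
  | zero =>
    intro _ v
    show v ∈ insert 1 ((adjInvF k π).image (· + 1)) ↔ _
    rw [Finset.mem_insert, Finset.mem_image]
    constructor
    · rintro (rfl | ⟨i, hi, rfl⟩)
      · exact Or.inl ⟨rfl, by have := myTauMem hτ 1 le_rfl (by omega); omega⟩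
      · rw [myAdjInv hπ hτ hinv] at hi
        obtain ⟨h1, h2, h3⟩ := hi
        refine Or.inr (Or.inl ⟨by omega, by omega, Or.inl ⟨?_, Or.inl ?_⟩⟩)
        · simpa using h3
        · have := myTauMem hτ (i + 1) (by omega) (by omega); omega
    · rintro (⟨rfl, _⟩ | ⟨h2, h3, hc⟩ | ⟨hvk, hc⟩)
      · exact Or.inl rfl
      · rcases hc with ⟨hlt, _⟩ | ⟨_, hle, _⟩
        · refine Or.inr ⟨v - 1, ?_, by omega⟩
          rw [myAdjInv hπ hτ hinv]
          have hv : v - 1 + 1 = v := by omega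
          rw [hv]
          exact ⟨by omega, by omega, hlt⟩
        · exfalso; have := myTauMem hτ (v - 1) (by omega) (by omega); omega
      · exfalso; have := myTauMem hτ (k - 1) (by omega) (by omega); omega
  | succ j ih =>
    intro hj v
    have ihj := ih (by omega)
    obtain ⟨hw1, hw2⟩ := Set.mem_Icc.1 (hπ.1.mapsTo (Set.mem_Icc.2 ⟨by omega, hj⟩) :
      π (j + 1) ∈ Set.Icc 1 (k - 1))
    have hτw : τ (π (j + 1)) = j + 1 := hinv _ (Finset.mem_Icc.2 ⟨by omega, hj⟩)
    have huniq : ∀ u, 1 ≤ u → u ≤ k - 1 → τ u = j + 1 → u = π (j + 1) := by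
      intro u h1 h2 h3
      rw [← myPiTau hπ hinv u h1 h2, h3]
    show v ∈ insert (π (j + 1) + 1) ((sortedFam k π j).erase (π (j + 1))) ↔ _
    rw [Finset.mem_insert, Finset.mem_erase, ihj v]
    by_cases hv0 : 1 ≤ v ∧ v ≤ k
    case neg =>
      simp only [memF]
      constructor
      · rintro (h | ⟨_, ⟨rfl, _⟩ | ⟨a, b, _⟩ | ⟨rfl, _⟩⟩) <;> omega
      · rintro (⟨rfl, _⟩ | ⟨a, b, _⟩ | ⟨rfl, _⟩) <;> omega
    case pos =>
    obtain ⟨hv1, hvk⟩ := hv0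
    rcases Nat.lt_or_ge v 2 with hv | hv
    · have hv' : v = 1 := by omega
      subst hv'
      by_cases hw : π (j + 1) = 1
      · rw [hw] at hτw ⊢
        simp only [memF, true_and, and_true]; omega
      · have hne : τ 1 ≠ j + 1 := fun h => hw ((huniq 1 le_rfl (by omega) h).symm)
        simp only [memF, true_and, and_true]; omega
    rcases Nat.lt_or_ge v k with hvmid | hvk'
    · have hvk1 : v ≤ k - 1 := by omega
      have hA := myTauMem hτ v (by omega) hvk1
      have hB := myTauMem hτ (v - 1) (by omega) (by omega)
      have hABne : τ v ≠ τ (v - 1) := by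
        intro h
        have e1 := myPiTau hπ hinv v (by omega) hvk1
        have e2 := myPiTau hπ hinv (v - 1) (by omega) (by omega)
        rw [← h] at e2
        omega
      by_cases hvw : v = π (j + 1)
      · have hτv : τ v = j + 1 := by rw [hvw]; exact hτw
        have hτv1 : τ (v - 1) ≠ j + 1 := fun h => by
          have := huniq (v - 1) (by omega) (by omega) h; omega
        simp only [memF, true_and, and_true]; omega
      · by_cases hvw1 : v = π (j + 1) + 1
        · have hτv1 : τ (v - 1) = j + 1 := by
            rw [show v - 1 = π (j + 1) by omega]; exact hτw
          have hτv : τ v ≠ j + 1 := fun h => hvw (huniq v (by omega) hvk1 h)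
          simp only [memF, true_and, and_true]; omega
        · have hτv : τ v ≠ j + 1 := fun h => hvw (huniq v (by omega) hvk1 h)
          have hτv1 : τ (v - 1) ≠ j + 1 := fun h => by
            have := huniq (v - 1) (by omega) (by omega) h; omega
          simp only [memF, true_and, and_true]; omega
    · have hv' : v = k := by omega
      have hQ := myTauMem hτ (k - 1) (by omega) le_rfl
      by_cases hw : π (j + 1) = k - 1
      · rw [hw] at hτw
        simp only [memF, true_and, and_true]; omega
      · have hne : τ (k - 1) ≠ j + 1 := fun h => hw ((huniq (k - 1) (by omega) le_rfl h).symm)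
        simp only [memF, true_and, and_true]; omega

private lemma myFilterCard (k x y : ℕ) (p : ℕ → Prop) [DecidablePred p]
    (hx : 1 ≤ x) (hy : y ≤ k)
    (h : ∀ l, 1 ≤ l → l ≤ k → (p l ↔ x ≤ l ∧ l ≤ y)) :
    ((Finset.Icc 1 k).filter p).card = y + 1 - x := by
  have e : (Finset.Icc 1 k).filter p = Finset.Icc x y := by
    ext l
    simp only [Finset.mem_filter, Finset.mem_Icc]
    constructor
    · rintro ⟨⟨h1, h2⟩, hp⟩
      exact (h l h1 h2).1 hp
    · intro hl
      have h1 : 1 ≤ l := by omega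
      have h2 : l ≤ k := by omega
      exact ⟨⟨h1, h2⟩, (h l h1 h2).2 hl⟩
  rw [e, Nat.card_Icc]

private lemma mySum (k : ℕ) (p q : ℕ → Prop) [DecidablePred p] [DecidablePred q]
    (hpq : ∀ l, q l ↔ ¬ p l) :
    ((Finset.Icc 1 k).filter p).card + ((Finset.Icc 1 k).filter q).card = k := by
  have e : (Finset.Icc 1 k).filter q = (Finset.Icc 1 k).filter (fun l => ¬ p l) :=
    Finset.filter_congr (fun l _ => hpq l)
  rw [e]
  have := Finset.card_filter_add_card_filter_not (s := Finset.Icc 1 k) (p := p)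
  rw [Nat.card_Icc] at this
  omega

end MyAux

theorem stmt8 (k : ℕ) (hk : 3 ≤ k) (π τ : ℕ → ℕ) (hπ : OneLine k π) (hτ : OneLine k τ)
    (hinv : ∀ p ∈ Finset.Icc 1 (k - 1), τ (π p) = p)
    (hS : (adjInvF k π).Nonempty) :
    (∀ i ∈ Finset.Icc 1 k,
        2 ≤ ((Finset.Icc 1 k).filter fun l => i ∈ sortedFam k π (l - 1)).card ∧
        2 ≤ ((Finset.Icc 1 k).filter fun l => i ∉ sortedFam k π (l - 1)).card)
      ↔ ((∀ i ∈ Finset.Icc 1 (k - 2), τ i ≠ τ (i + 1) + 1 ∧ τ (i + 1) ≠ τ i + 1) ∧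
          π 1 ≠ 1 ∧ π 1 ≠ k - 1 ∧ π (k - 1) ≠ 1 ∧ π (k - 1) ≠ k - 1) := by
  have hπτ := myPiTau hπ hinv
  have hτm := myTauMem hτ
  have hmem := myMemSorted hk hπ hτ hinv
  have hτ1 := hτm 1 le_rfl (by omega)
  have hτk1 := hτm (k - 1) (by omega) le_rfl
  have tt : ∀ c q, 1 ≤ c → c ≤ k - 1 → 1 ≤ q → q ≤ k - 1 → (π q = c ↔ τ c = q) := by
    intro c q hc1 hc2 hq1 hq2
    constructor
    · intro h; rw [← h]; exact hinv q (Finset.mem_Icc.2 ⟨hq1, hq2⟩)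
    · intro h; rw [← h]; exact hπτ c hc1 hc2
  have inCount : ∀ v, 1 ≤ v → v ≤ k →
      ((Finset.Icc 1 k).filter fun l => v ∈ sortedFam k π (l - 1)).card
        = if v = 1 then τ 1 else if v = k then k - τ (k - 1)
          else if τ (v - 1) < τ v then τ v - τ (v - 1) else k - (τ (v - 1) - τ v) := by
    intro v h1 h2
    by_cases e1 : v = 1
    · subst e1
      rw [if_pos rfl]
      have := myFilterCard k 1 (τ 1) (fun l => (1 : ℕ) ∈ sortedFam k π (l - 1)) le_rfl (by omega)
        (fun l hl1 hl2 => by beta_reduce; rw [hmem (l - 1) (by omega) 1]; simp only [memF, true_and, and_true]; omega)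
      omega
    rw [if_neg e1]
    by_cases e2 : v = k
    · subst v
      rw [if_pos rfl]
      have := myFilterCard k (τ (k - 1) + 1) k (fun l => k ∈ sortedFam k π (l - 1)) (by omega)
        le_rfl (fun l hl1 hl2 => by beta_reduce; rw [hmem (l - 1) (by omega) k]; simp only [memF, true_and, and_true]; omega)
      omega
    rw [if_neg e2]
    have hA := hτm v (by omega) (by omega)
    have hB := hτm (v - 1) (by omega) (by omega)
    have hABne : τ v ≠ τ (v - 1) := by
      intro h
      have e3 := hπτ v (by omega) (by omega)
      have e4 := hπτ (v - 1) (by omega) (by omega)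
      rw [← h] at e4
      omega
    by_cases e3 : τ (v - 1) < τ v
    · rw [if_pos e3]
      have := myFilterCard k (τ (v - 1) + 1) (τ v) (fun l => v ∈ sortedFam k π (l - 1))
        (by omega) (by omega)
        (fun l hl1 hl2 => by beta_reduce; rw [hmem (l - 1) (by omega) v]; simp only [memF, true_and, and_true]; omega)
      omega
    · rw [if_neg e3]
      have hout := myFilterCard k (τ v + 1) (τ (v - 1)) (fun l => v ∉ sortedFam k π (l - 1))
        (by omega) (by omega)
        (fun l hl1 hl2 => by beta_reduce; rw [hmem (l - 1) (by omega) v]; simp only [memF, true_and, and_true]; omega)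
      have hs := mySum k (fun l => v ∈ sortedFam k π (l - 1))
        (fun l => v ∉ sortedFam k π (l - 1)) (fun l => Iff.rfl)
      rw [hout] at hs
      omega
  constructor
  · intro H
    obtain ⟨Hin1, Hout1⟩ := H 1 (Finset.mem_Icc.2 ⟨le_rfl, by omega⟩)
    obtain ⟨Hink, Houtk⟩ := H k (Finset.mem_Icc.2 ⟨by omega, le_rfl⟩)
    have hc1 := inCount 1 le_rfl (by omega)
    rw [if_pos rfl] at hc1
    have hck := inCount k (by omega) le_rfl
    rw [if_neg (by omega), if_pos rfl] at hck
    have hs1 := mySum k (fun l => (1 : ℕ) ∈ sortedFam k π (l - 1))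
      (fun l => (1 : ℕ) ∉ sortedFam k π (l - 1)) (fun l => Iff.rfl)
    have hsk := mySum k (fun l => k ∈ sortedFam k π (l - 1))
      (fun l => k ∉ sortedFam k π (l - 1)) (fun l => Iff.rfl)
    rw [hc1] at Hin1 hs1
    rw [hck] at Hink hsk
    refine ⟨?_, ?_, ?_, ?_, ?_⟩
    · intro i hi
      rw [Finset.mem_Icc] at hi
      obtain ⟨Hin, Hout⟩ := H (i + 1) (Finset.mem_Icc.2 ⟨by omega, by omega⟩)
      have hc := inCount (i + 1) (by omega) (by omega)
      rw [if_neg (by omega), if_neg (by omega)] at hc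
      simp only [Nat.add_sub_cancel] at hc
      have hs := mySum k (fun l => (i + 1) ∈ sortedFam k π (l - 1))
        (fun l => (i + 1) ∉ sortedFam k π (l - 1)) (fun l => Iff.rfl)
      have hA := hτm i (by omega) (by omega)
      have hB := hτm (i + 1) (by omega) (by omega)
      have hABne : τ i ≠ τ (i + 1) := by
        intro h
        have e3 := hπτ i (by omega) (by omega)
        have e4 := hπτ (i + 1) (by omega) (by omega)
        rw [h] at e3
        omega
      rw [hc] at Hin hs
      by_cases hlt : τ i < τ (i + 1)
      · rw [if_pos hlt] at Hin hs
        omega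
      · rw [if_neg hlt] at Hin hs
        omega
    · intro h
      rw [tt 1 1 le_rfl (by omega) le_rfl (by omega)] at h
      omega
    · intro h
      rw [tt (k - 1) 1 (by omega) le_rfl le_rfl (by omega)] at h
      omega
    · intro h
      rw [tt 1 (k - 1) le_rfl (by omega) (by omega) le_rfl] at h
      omega
    · intro h
      rw [tt (k - 1) (k - 1) (by omega) le_rfl (by omega) le_rfl] at h
      omega
  · rintro ⟨hadj, h1, h2, h3, h4⟩ i hi
    rw [Finset.mem_Icc] at hi
    have ht1a : τ 1 ≠ 1 := fun h => h1 ((tt 1 1 le_rfl (by omega) le_rfl (by omega)).2 h)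
    have ht1b : τ 1 ≠ k - 1 := fun h => h3 ((tt 1 (k - 1) le_rfl (by omega) (by omega) le_rfl).2 h)
    have htka : τ (k - 1) ≠ 1 := fun h => h2 ((tt (k - 1) 1 (by omega) le_rfl le_rfl (by omega)).2 h)
    have htkb : τ (k - 1) ≠ k - 1 :=
      fun h => h4 ((tt (k - 1) (k - 1) (by omega) le_rfl (by omega) le_rfl).2 h)
    have hc := inCount i hi.1 hi.2
    have hs := mySum k (fun l => i ∈ sortedFam k π (l - 1))
      (fun l => i ∉ sortedFam k π (l - 1)) (fun l => Iff.rfl)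
    by_cases e1 : i = 1
    · subst e1
      rw [if_pos rfl] at hc
      rw [hc] at hs
      exact ⟨by rw [hc]; omega, by omega⟩
    by_cases e2 : i = k
    · subst i
      rw [if_neg (by omega), if_pos rfl] at hc
      rw [hc] at hs
      exact ⟨by rw [hc]; omega, by omega⟩
    · rw [if_neg e1, if_neg e2] at hc
      have hA := hτm i (by omega) (by omega)
      have hB := hτm (i - 1) (by omega) (by omega)
      have hABne : τ (i - 1) ≠ τ i := by
        intro h
        have e3 := hπτ i (by omega) (by omega)
        have e4 := hπτ (i - 1) (by omega) (by omega)
        rw [h] at e4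
        omega
      have hadji := hadj (i - 1) (Finset.mem_Icc.2 ⟨by omega, by omega⟩)
      rw [show i - 1 + 1 = i by omega] at hadji
      by_cases hlt : τ (i - 1) < τ i
      · rw [if_pos hlt] at hc
        rw [hc] at hs
        exact ⟨by rw [hc]; omega, by omega⟩
      · rw [if_neg hlt] at hc
        rw [hc] at hs
        exact ⟨by rw [hc]; omega, by omega⟩


end
end
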